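/- arXiv:1510.08504 — 3 statements merged into one kernel-verified Lean document; each statement's English description precedes it below -/
import Mathlib

section
/- For every ξ ≠ 0, the one-dimensional kernel satisfies the upper bound K(ξ) ≤ C |sinh ξ|^{-1-2γ} (cosh ξ)^{(2-n+2γ)/2} for some constant C > 0 depending only on n and γ, where K(ξ) = ∫_0^π (sin φ)^{n-2} (cosh ξ − cos φ)^{-(n+2γ)/2} dφ. -/
open MeasureTheory Real Set Filter

set_option maxHeartbeats 1000000

lemma stmt2_integrand_cont (n : ℕ) (γ : ℝ) (c : ℝ) (hc : 1 < c) :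
    IntervalIntegrable
      (fun φ => Real.sin φ ^ (n - 2) * (c - Real.cos φ) ^ (-((n:ℝ) + 2*γ)/2))
      volume 0 Real.pi := by
  apply ContinuousOn.intervalIntegrable
  apply ContinuousOn.mul
  · exact (continuous_sin.pow _).continuousOn
  · apply ContinuousOn.rpow_const
    · exact (continuous_const.sub continuous_cos).continuousOn
    · intro x _
      left
      have := Real.cos_le_one x
      intro h
      nlinarith

lemma stmt2_smallc (n : ℕ) (γ : ℝ) (hγ0 : 0 < γ) (hγ1 : γ < 1)
    (hn : 2 + 2*γ ≤ (n:ℝ)) (c : ℝ) (hc : 1 < c) (hc2 : c ≤ 2) :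
    (∫ φ in (0:ℝ)..Real.pi,
        Real.sin φ ^ (n - 2) * (c - Real.cos φ) ^ (-((n:ℝ) + 2*γ)/2))
      ≤ (2:ℝ) ^ (((n:ℝ)-2)/2) * (1 + (2/Real.pi^2) ^ (-(1+γ)) / (1+2*γ))
          * (c-1) ^ (-(1/2+γ)) := by
  have hπ : (0:ℝ) < Real.pi := Real.pi_pos
  set a : ℝ := c - 1 with ha_def
  have ha : 0 < a := by simp [ha_def]; linarith
  have ha1 : a ≤ 1 := by simp [ha_def]; linarith
  set k : ℝ := 2 / Real.pi ^ 2 with hk_def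
  have hk : 0 < k := by positivity
  set E : ℝ := ((n:ℝ)-2)/2 with hE_def
  -- pointwise bound on [0, π]
  have hpoint : ∀ φ ∈ Set.Icc (0:ℝ) Real.pi,
      Real.sin φ ^ (n - 2) * (c - Real.cos φ) ^ (-((n:ℝ) + 2*γ)/2)
        ≤ (2:ℝ) ^ E * (a + k * φ^2) ^ (-(1+γ)) := by
    intro φ hφ
    have hs : 0 ≤ Real.sin φ := Real.sin_nonneg_of_nonneg_of_le_pi hφ.1 hφ.2
    have hcos1 : Real.cos φ ≤ 1 := Real.cos_le_one φ
    have hpos : 0 < c - Real.cos φ := by linarith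
    have hak : 0 < a + k * φ^2 := by positivity
    have hcle : Real.cos φ ≤ 1 - k * φ^2 := by
      have habs : |φ| ≤ Real.pi := by
        rw [abs_of_nonneg hφ.1]; exact hφ.2
      simpa [hk_def, mul_comm] using Real.cos_le_one_sub_mul_cos_sq habs
    have hge : a + k * φ^2 ≤ c - Real.cos φ := by
      simp only [ha_def]; linarith
    -- sin φ ^ (n-2) ≤ (2 (c - cos φ)) ^ E
    have hsin : Real.sin φ ^ (n - 2) ≤ (2*(c - Real.cos φ)) ^ E := by
      have hkey : Real.sin φ ^ 2 ≤ 2*(c - Real.cos φ) := by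
        nlinarith [Real.sin_sq_add_cos_sq φ, Real.neg_one_le_cos φ]
      have h2 : (0:ℝ) < 2*(c - Real.cos φ) := by linarith
      have h1 : Real.sin φ ≤ (2*(c - Real.cos φ)) ^ ((1:ℝ)/2) := by
        rw [← Real.sqrt_eq_rpow]
        exact Real.le_sqrt_of_sq_le hkey
      calc Real.sin φ ^ (n - 2)
          ≤ ((2*(c - Real.cos φ)) ^ ((1:ℝ)/2)) ^ (n - 2) :=
            pow_le_pow_left₀ hs h1 _
        _ = (2*(c - Real.cos φ)) ^ E := by
            rw [← Real.rpow_natCast ((2*(c - Real.cos φ)) ^ ((1:ℝ)/2)) (n-2),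
              ← Real.rpow_mul h2.le]
            congr 1
            have h2n : (2:ℕ) ≤ n := by
              have : (2:ℝ) < (n:ℝ) := by linarith
              exact_mod_cast this.le
            rw [hE_def]
            push_cast [Nat.cast_sub h2n]
            ring
    have hrpow_nonneg : (0:ℝ) ≤ (c - Real.cos φ) ^ (-((n:ℝ) + 2*γ)/2) :=
      Real.rpow_nonneg hpos.le _
    calc Real.sin φ ^ (n - 2) * (c - Real.cos φ) ^ (-((n:ℝ) + 2*γ)/2)
        ≤ (2*(c - Real.cos φ)) ^ E * (c - Real.cos φ) ^ (-((n:ℝ) + 2*γ)/2) := by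
          exact mul_le_mul_of_nonneg_right hsin hrpow_nonneg
      _ = (2:ℝ) ^ E * ((c - Real.cos φ) ^ E * (c - Real.cos φ) ^ (-((n:ℝ) + 2*γ)/2)) := by
          rw [Real.mul_rpow (by norm_num) hpos.le]; ring
      _ = (2:ℝ) ^ E * (c - Real.cos φ) ^ (-(1+γ)) := by
          rw [← Real.rpow_add hpos]
          congr 1
          rw [hE_def]; ring
      _ ≤ (2:ℝ) ^ E * (a + k * φ^2) ^ (-(1+γ)) := by
          apply mul_le_mul_of_nonneg_left _ (Real.rpow_nonneg (by norm_num) _)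
          exact Real.rpow_le_rpow_of_nonpos hak hge (by linarith)
  -- continuity of the comparison function
  have hgcont : Continuous (fun φ : ℝ => (2:ℝ) ^ E * (a + k * φ^2) ^ (-(1+γ))) := by
    apply continuous_const.mul
    apply Continuous.rpow_const
    · continuity
    · intro x; left; positivity
  have hint1 := stmt2_integrand_cont n γ c hc
  -- compare
  have hstep1 : (∫ φ in (0:ℝ)..Real.pi,
      Real.sin φ ^ (n - 2) * (c - Real.cos φ) ^ (-((n:ℝ) + 2*γ)/2))
      ≤ ∫ φ in (0:ℝ)..Real.pi, (2:ℝ) ^ E * (a + k * φ^2) ^ (-(1+γ)) := by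
    apply intervalIntegral.integral_mono_on hπ.le hint1
      (hgcont.intervalIntegrable 0 Real.pi) hpoint
  -- now bound the comparison integral
  have hsa : Real.sqrt a ≤ 1 := by
    rw [show (1:ℝ) = Real.sqrt 1 by simp]
    exact Real.sqrt_le_sqrt ha1
  have hsa0 : 0 < Real.sqrt a := Real.sqrt_pos.mpr ha
  have hsaπ : Real.sqrt a ≤ Real.pi := le_trans hsa (by linarith [Real.pi_gt_three])
  set g : ℝ → ℝ := fun φ => (a + k * φ^2) ^ (-(1+γ)) with hg_def
  have hgc : Continuous g := by
    apply Continuous.rpow_const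
    · continuity
    · intro x; left; positivity
  have hsplit : (∫ φ in (0:ℝ)..Real.pi, g φ)
      = (∫ φ in (0:ℝ)..Real.sqrt a, g φ) + ∫ φ in Real.sqrt a..Real.pi, g φ :=
    (intervalIntegral.integral_add_adjacent_intervals
      (hgc.intervalIntegrable _ _) (hgc.intervalIntegrable _ _)).symm
  -- first piece
  have hJ1 : (∫ φ in (0:ℝ)..Real.sqrt a, g φ) ≤ a ^ (-(1/2+γ)) := by
    have hb : ∀ φ ∈ Set.Icc (0:ℝ) (Real.sqrt a), g φ ≤ a ^ (-(1+γ)) := by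
      intro φ hφ
      apply Real.rpow_le_rpow_of_nonpos ha (by nlinarith [sq_nonneg φ, hk.le]) (by linarith)
    calc (∫ φ in (0:ℝ)..Real.sqrt a, g φ)
        ≤ ∫ _ in (0:ℝ)..Real.sqrt a, a ^ (-(1+γ)) :=
          intervalIntegral.integral_mono_on hsa0.le (hgc.intervalIntegrable _ _)
            (intervalIntegrable_const) hb
      _ = Real.sqrt a * a ^ (-(1+γ)) := by
          rw [intervalIntegral.integral_const, smul_eq_mul]; ring
      _ = a ^ (-(1/2+γ)) := by
          rw [Real.sqrt_eq_rpow, ← Real.rpow_add ha]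
          congr 1; ring
  -- second piece
  have hJ2 : (∫ φ in Real.sqrt a..Real.pi, g φ)
      ≤ k ^ (-(1+γ)) / (1+2*γ) * a ^ (-(1/2+γ)) := by
    have hbc : ContinuousOn (fun φ : ℝ => k ^ (-(1+γ)) * φ ^ (-(2+2*γ)))
        (Set.uIcc (Real.sqrt a) Real.pi) := by
      apply ContinuousOn.mul continuousOn_const
      apply ContinuousOn.rpow_const continuousOn_id
      intro x hx
      left
      have hx' : Real.sqrt a ≤ x := by
        rcases Set.mem_uIcc.mp hx with h | h
        · exact h.1
        · linarith [h.1, hsaπ]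
      exact ne_of_gt (lt_of_lt_of_le hsa0 hx')
    have hb : ∀ φ ∈ Set.Icc (Real.sqrt a) Real.pi,
        g φ ≤ k ^ (-(1+γ)) * φ ^ (-(2+2*γ)) := by
      intro φ hφ
      have hφ0 : 0 < φ := lt_of_lt_of_le hsa0 hφ.1
      have h1 : (k * φ^2) ^ (-(1+γ)) = k ^ (-(1+γ)) * φ ^ (-(2+2*γ)) := by
        rw [Real.mul_rpow hk.le (sq_nonneg φ)]
        congr 1
        rw [← Real.rpow_natCast φ 2, ← Real.rpow_mul hφ0.le]
        norm_num; ring_nf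
      rw [← h1]
      exact Real.rpow_le_rpow_of_nonpos (by positivity) (by linarith) (by linarith)
    have hint2 : (∫ φ in Real.sqrt a..Real.pi, k ^ (-(1+γ)) * φ ^ (-(2+2*γ)))
        = k ^ (-(1+γ)) * ((Real.pi ^ (-(2+2*γ)+1) - (Real.sqrt a) ^ (-(2+2*γ)+1))
            / (-(2+2*γ)+1)) := by
      rw [intervalIntegral.integral_const_mul, integral_rpow]
      right
      constructor
      · intro h; nlinarith
      · intro h
        rcases Set.mem_uIcc.mp h with h' | h'
        · linarith [h'.1, hsa0]
        · linarith [h'.1, hπ]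
    calc (∫ φ in Real.sqrt a..Real.pi, g φ)
        ≤ ∫ φ in Real.sqrt a..Real.pi, k ^ (-(1+γ)) * φ ^ (-(2+2*γ)) :=
          intervalIntegral.integral_mono_on hsaπ (hgc.intervalIntegrable _ _)
            (hbc.intervalIntegrable) hb
      _ = k ^ (-(1+γ)) * ((Real.pi ^ (-(2+2*γ)+1) - (Real.sqrt a) ^ (-(2+2*γ)+1))
            / (-(2+2*γ)+1)) := hint2
      _ ≤ k ^ (-(1+γ)) / (1+2*γ) * a ^ (-(1/2+γ)) := by
          have hsaval : (Real.sqrt a) ^ (-(2+2*γ)+1) = a ^ (-(1/2+γ)) := by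
            rw [Real.sqrt_eq_rpow, ← Real.rpow_mul ha.le]
            congr 1; ring
          rw [hsaval]
          have hπpow : 0 ≤ Real.pi ^ (-(2+2*γ)+1) := Real.rpow_nonneg hπ.le _
          have h12γ : (0:ℝ) < 1 + 2*γ := by linarith
          have hknn : 0 ≤ k ^ (-(1+γ)) := Real.rpow_nonneg hk.le _
          have hval : (Real.pi ^ (-(2+2*γ)+1) - a ^ (-(1/2+γ))) / (-(2+2*γ)+1)
              = (a ^ (-(1/2+γ)) - Real.pi ^ (-(2+2*γ)+1)) / (1+2*γ) := by
            rw [div_eq_div_iff (by intro h; simp at h; linarith) (ne_of_gt h12γ)]; ring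
          rw [hval, show k ^ (-(1+γ)) * ((a ^ (-(1/2+γ)) - Real.pi ^ (-(2+2*γ)+1)) / (1+2*γ))
              = k ^ (-(1+γ)) / (1+2*γ) * (a ^ (-(1/2+γ)) - Real.pi ^ (-(2+2*γ)+1)) by ring]
          apply mul_le_mul_of_nonneg_left _ (by positivity)
          linarith
  -- assemble
  calc (∫ φ in (0:ℝ)..Real.pi,
        Real.sin φ ^ (n - 2) * (c - Real.cos φ) ^ (-((n:ℝ) + 2*γ)/2))
      ≤ ∫ φ in (0:ℝ)..Real.pi, (2:ℝ) ^ E * g φ := hstep1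
    _ = (2:ℝ) ^ E * ∫ φ in (0:ℝ)..Real.pi, g φ :=
        intervalIntegral.integral_const_mul _ _
    _ ≤ (2:ℝ) ^ E * (a ^ (-(1/2+γ)) + k ^ (-(1+γ)) / (1+2*γ) * a ^ (-(1/2+γ))) := by
        apply mul_le_mul_of_nonneg_left _ (Real.rpow_nonneg (by norm_num) _)
        rw [hsplit]
        exact add_le_add hJ1 hJ2
    _ = (2:ℝ) ^ E * (1 + k ^ (-(1+γ)) / (1+2*γ)) * a ^ (-(1/2+γ)) := by ring

lemma stmt2_largec (n : ℕ) (γ : ℝ) (hγ0 : 0 < γ)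
    (hn : 2 + 2*γ ≤ (n:ℝ)) (c : ℝ) (hc : 2 ≤ c) :
    (∫ φ in (0:ℝ)..Real.pi,
        Real.sin φ ^ (n - 2) * (c - Real.cos φ) ^ (-((n:ℝ) + 2*γ)/2))
      ≤ Real.pi * (2:ℝ) ^ (((n:ℝ) + 2*γ)/2) * c ^ (-((n:ℝ) + 2*γ)/2) := by
  have hπ : (0:ℝ) < Real.pi := Real.pi_pos
  have hc1 : (1:ℝ) < c := by linarith
  have hexp : -((n:ℝ) + 2*γ)/2 ≤ 0 := by
    have : (0:ℝ) < (n:ℝ) + 2*γ := by linarith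
    linarith
  have hpoint : ∀ φ ∈ Set.Icc (0:ℝ) Real.pi,
      Real.sin φ ^ (n - 2) * (c - Real.cos φ) ^ (-((n:ℝ) + 2*γ)/2)
        ≤ (c/2) ^ (-((n:ℝ) + 2*γ)/2) := by
    intro φ hφ
    have hs : 0 ≤ Real.sin φ := Real.sin_nonneg_of_nonneg_of_le_pi hφ.1 hφ.2
    have hs1 : Real.sin φ ≤ 1 := Real.sin_le_one φ
    have hsp : Real.sin φ ^ (n - 2) ≤ 1 := pow_le_one₀ hs hs1
    have hcos1 : Real.cos φ ≤ 1 := Real.cos_le_one φ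
    have h2 : c/2 ≤ c - Real.cos φ := by linarith
    have h2' : (0:ℝ) < c/2 := by linarith
    calc Real.sin φ ^ (n - 2) * (c - Real.cos φ) ^ (-((n:ℝ) + 2*γ)/2)
        ≤ 1 * (c - Real.cos φ) ^ (-((n:ℝ) + 2*γ)/2) :=
          mul_le_mul_of_nonneg_right hsp (Real.rpow_nonneg (by linarith) _)
      _ = (c - Real.cos φ) ^ (-((n:ℝ) + 2*γ)/2) := one_mul _
      _ ≤ (c/2) ^ (-((n:ℝ) + 2*γ)/2) :=
          Real.rpow_le_rpow_of_nonpos h2' h2 hexp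
  calc (∫ φ in (0:ℝ)..Real.pi,
        Real.sin φ ^ (n - 2) * (c - Real.cos φ) ^ (-((n:ℝ) + 2*γ)/2))
      ≤ ∫ _ in (0:ℝ)..Real.pi, (c/2) ^ (-((n:ℝ) + 2*γ)/2) :=
        intervalIntegral.integral_mono_on hπ.le (stmt2_integrand_cont n γ c hc1)
          intervalIntegrable_const hpoint
    _ = Real.pi * (c/2) ^ (-((n:ℝ) + 2*γ)/2) := by
        rw [intervalIntegral.integral_const, smul_eq_mul]; ring
    _ = Real.pi * (2:ℝ) ^ (((n:ℝ) + 2*γ)/2) * c ^ (-((n:ℝ) + 2*γ)/2) := by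
        rw [Real.div_rpow (by linarith) (by norm_num)]
        rw [div_eq_mul_inv, ← Real.rpow_neg (by norm_num : (0:ℝ) ≤ 2)]
        ring_nf

lemma stmt2_core (n : ℕ) (γ : ℝ) (hγ : γ ∈ Set.Ioo (0:ℝ) 1)
    (hn : 2 + 2*γ ≤ (n:ℝ)) :
    ∃ C > (0:ℝ), ∀ c : ℝ, 1 < c →
      (∫ φ in (0:ℝ)..Real.pi,
          Real.sin φ ^ (n - 2) * (c - Real.cos φ) ^ (-((n:ℝ) + 2*γ)/2))
        ≤ C * (c^2 - 1) ^ (-(1/2+γ)) * c ^ ((2 - (n:ℝ) + 2*γ)/2) := by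
  obtain ⟨hγ0, hγ1⟩ := hγ
  have hπ : (0:ℝ) < Real.pi := Real.pi_pos
  set q : ℝ := (2 - (n:ℝ) + 2*γ)/2 with hq_def
  have hq : q ≤ 0 := by rw [hq_def]; linarith
  set CB : ℝ := (2:ℝ) ^ (((n:ℝ)-2)/2) * (1 + (2/Real.pi^2) ^ (-(1+γ)) / (1+2*γ))
    with hCB_def
  have hCBpos : 0 < CB := by
    apply mul_pos (Real.rpow_pos_of_pos (by norm_num) _)
    have : 0 < (2/Real.pi^2) ^ (-(1+γ)) := Real.rpow_pos_of_pos (by positivity) _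
    have h12 : (0:ℝ) < 1 + 2*γ := by linarith
    positivity
  set C1 : ℝ := CB * (3:ℝ) ^ ((1:ℝ)/2+γ) * (2:ℝ) ^ (-q) with hC1_def
  set C2 : ℝ := Real.pi * (2:ℝ) ^ (((n:ℝ) + 2*γ)/2) with hC2_def
  have hC1pos : 0 < C1 := by
    apply mul_pos (mul_pos hCBpos (Real.rpow_pos_of_pos (by norm_num) _))
      (Real.rpow_pos_of_pos (by norm_num) _)
  have hC2pos : 0 < C2 := mul_pos hπ (Real.rpow_pos_of_pos (by norm_num) _)
  refine ⟨C1 + C2, by linarith, fun c hc => ?_⟩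
  have hc0 : (0:ℝ) < c := by linarith
  have hc21 : (0:ℝ) < c^2 - 1 := by nlinarith
  have hcore : 0 < (c^2 - 1) ^ (-(1/2+γ)) * c ^ q :=
    mul_pos (Real.rpow_pos_of_pos hc21 _) (Real.rpow_pos_of_pos hc0 _)
  rcases le_or_gt c 2 with hc2 | hc2
  · -- small c
    have hI := stmt2_smallc n γ hγ0 hγ1 hn c hc hc2
    have hfact : (c^2 - 1) ^ (-(1/2+γ)) = (c-1) ^ (-(1/2+γ)) * (c+1) ^ (-(1/2+γ)) := by
      rw [← Real.mul_rpow (by linarith) (by linarith)]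
      congr 1; ring
    have h3 : (3:ℝ) ^ (-((1:ℝ)/2+γ)) ≤ (c+1) ^ (-(1/2+γ)) := by
      have := Real.rpow_le_rpow_of_nonpos (show (0:ℝ) < c+1 by linarith)
        (show c+1 ≤ 3 by linarith) (show -((1:ℝ)/2+γ) ≤ 0 by linarith)
      convert this using 2 <;> ring_nf
    have h2q : (2:ℝ) ^ q ≤ c ^ q := Real.rpow_le_rpow_of_nonpos hc0 hc2 hq
    have hc1pow : 0 < (c-1) ^ (-(1/2+γ)) := Real.rpow_pos_of_pos (by linarith) _
    have e1 : (3:ℝ) ^ ((1:ℝ)/2+γ) * (3:ℝ) ^ (-((1:ℝ)/2+γ)) = 1 := by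
      rw [← Real.rpow_add (by norm_num : (0:ℝ) < 3),
        show ((1:ℝ)/2+γ) + -((1:ℝ)/2+γ) = 0 by ring, Real.rpow_zero]
    have e2 : (2:ℝ) ^ (-q) * (2:ℝ) ^ q = 1 := by
      rw [← Real.rpow_add (by norm_num : (0:ℝ) < 2),
        show -q + q = 0 by ring, Real.rpow_zero]
    have hcombine : CB * (c-1) ^ (-(1/2+γ))
        ≤ C1 * ((c^2 - 1) ^ (-(1/2+γ)) * c ^ q) := by
      rw [hfact, hC1_def]
      have e3 : CB * (c-1) ^ (-(1/2+γ))
          = CB * (3:ℝ) ^ ((1:ℝ)/2+γ) * (2:ℝ) ^ (-q)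
            * ((c-1) ^ (-(1/2+γ)) * ((3:ℝ) ^ (-((1:ℝ)/2+γ)) * (2:ℝ) ^ q)) := by
        rw [show CB * (3:ℝ) ^ ((1:ℝ)/2+γ) * (2:ℝ) ^ (-q)
            * ((c-1) ^ (-(1/2+γ)) * ((3:ℝ) ^ (-((1:ℝ)/2+γ)) * (2:ℝ) ^ q))
            = CB * ((3:ℝ) ^ ((1:ℝ)/2+γ) * (3:ℝ) ^ (-((1:ℝ)/2+γ)))
              * ((2:ℝ) ^ (-q) * (2:ℝ) ^ q) * (c-1) ^ (-(1/2+γ)) from by ring, e1, e2]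
        ring
      rw [e3]
      have hpos1 : (0:ℝ) ≤ CB * (3:ℝ) ^ ((1:ℝ)/2+γ) * (2:ℝ) ^ (-q) := by positivity
      apply mul_le_mul_of_nonneg_left _ hpos1
      have hmm := mul_le_mul h3 h2q (Real.rpow_nonneg (by norm_num) q)
        (Real.rpow_nonneg (by linarith) _)
      calc (c-1) ^ (-(1/2+γ)) * ((3:ℝ) ^ (-((1:ℝ)/2+γ)) * (2:ℝ) ^ q)
          ≤ (c-1) ^ (-(1/2+γ)) * ((c+1) ^ (-(1/2+γ)) * c ^ q) :=
            mul_le_mul_of_nonneg_left hmm hc1pow.le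
        _ = (c-1) ^ (-(1/2+γ)) * (c+1) ^ (-(1/2+γ)) * c ^ q := by ring
    calc (∫ φ in (0:ℝ)..Real.pi,
          Real.sin φ ^ (n - 2) * (c - Real.cos φ) ^ (-((n:ℝ) + 2*γ)/2))
        ≤ CB * (c-1) ^ (-(1/2+γ)) := hI
      _ ≤ C1 * ((c^2 - 1) ^ (-(1/2+γ)) * c ^ q) := hcombine
      _ ≤ (C1 + C2) * ((c^2 - 1) ^ (-(1/2+γ)) * c ^ q) := by nlinarith
      _ = (C1 + C2) * (c^2 - 1) ^ (-(1/2+γ)) * c ^ q := by ring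
  · -- large c
    have hI := stmt2_largec n γ hγ0 hn c hc2.le
    have hkey : c ^ (-((n:ℝ) + 2*γ)/2) ≤ (c^2 - 1) ^ (-(1/2+γ)) * c ^ q := by
      have h1 : (c^2) ^ (-((1:ℝ)/2+γ)) ≤ (c^2 - 1) ^ (-(1/2+γ)) := by
        have := Real.rpow_le_rpow_of_nonpos hc21 (show c^2 - 1 ≤ c^2 by linarith)
          (show -((1:ℝ)/2+γ) ≤ 0 by linarith)
        convert this using 2 <;> ring_nf
      have h2 : (c^2) ^ (-((1:ℝ)/2+γ)) * c ^ q = c ^ (-((n:ℝ) + 2*γ)/2) := by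
        rw [← Real.rpow_natCast c 2, ← Real.rpow_mul hc0.le, ← Real.rpow_add hc0]
        congr 1
        rw [hq_def]; push_cast; ring
      rw [← h2]
      exact mul_le_mul_of_nonneg_right h1 (Real.rpow_nonneg hc0.le _)
    calc (∫ φ in (0:ℝ)..Real.pi,
          Real.sin φ ^ (n - 2) * (c - Real.cos φ) ^ (-((n:ℝ) + 2*γ)/2))
        ≤ C2 * c ^ (-((n:ℝ) + 2*γ)/2) := hI
      _ ≤ C2 * ((c^2 - 1) ^ (-(1/2+γ)) * c ^ q) :=
          mul_le_mul_of_nonneg_left hkey hC2pos.le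
      _ ≤ (C1 + C2) * ((c^2 - 1) ^ (-(1/2+γ)) * c ^ q) := by nlinarith
      _ = (C1 + C2) * (c^2 - 1) ^ (-(1/2+γ)) * c ^ q := by ring

/-- Upper bound for the kernel: `K(ξ) ≤ C |sinh ξ|^{-1-2γ} (cosh ξ)^{(2-n+2γ)/2}`. -/
theorem stmt_2 (n : ℕ) (γ : ℝ) (hγ : γ ∈ Set.Ioo (0:ℝ) 1)
    (hn : 2 + 2*γ ≤ (n:ℝ)) (K : ℝ → ℝ)
    (hK : ∀ ξ : ℝ, K ξ =
      ∫ φ in (0:ℝ)..Real.pi,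
        (Real.sin φ) ^ (n - 2) * (Real.cosh ξ - Real.cos φ) ^ (-((n:ℝ) + 2*γ)/2)) :
    ∃ C > (0:ℝ), ∀ ξ : ℝ, ξ ≠ 0 →
      K ξ ≤ C * |Real.sinh ξ| ^ (-(1 + 2*γ)) * (Real.cosh ξ) ^ ((2 - (n:ℝ) + 2*γ)/2) := by
  obtain ⟨C, hCpos, hC⟩ := stmt2_core n γ hγ hn
  refine ⟨C, hCpos, fun ξ hξ => ?_⟩
  have hc : 1 < Real.cosh ξ := Real.one_lt_cosh.mpr hξ
  have habs : (Real.cosh ξ ^ 2 - 1) ^ (-(1/2+γ)) = |Real.sinh ξ| ^ (-(1 + 2*γ)) := by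
    have hs2 : Real.sinh ξ ^ 2 = Real.cosh ξ ^ 2 - 1 := by
      rw [Real.cosh_sq]; ring
    rw [← hs2, ← Real.sqrt_sq_eq_abs, Real.sqrt_eq_rpow,
      ← Real.rpow_mul (sq_nonneg _)]
    congr 1
    ring
  rw [hK ξ, ← habs]
  exact hC (Real.cosh ξ) hc
end

section
/- Decay of the fractional Laplacian of an inverse-power test function: let N ≥ 1, γ ∈ (0,1), and η(x) = (1 + |x|)^{-(N+2γ)} on ℝ^N. Then there is a constant C > 0 such that |(−Δ)^γ η(x)| ≤ C (1 + |x|)^{-(N+2γ)} for all x with |x| ≥ 1. -/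
open MeasureTheory Real Filter Topology

/-- derivative of `t ↦ (1+t)^c` -/
lemma hasDerivAt_one_add_rpow {t c : ℝ} (ht : 0 < 1 + t) :
    HasDerivAt (fun u : ℝ => (1 + u) ^ c) (c * (1 + t) ^ (c - 1)) t := by
  have h1 : HasDerivAt (fun u : ℝ => 1 + u) 1 t := (hasDerivAt_id t).const_add 1
  have h2 : HasDerivAt (fun v : ℝ => v ^ c) (c * (1 + t) ^ (c - 1)) (1 + t) :=
    Real.hasDerivAt_rpow_const (Or.inl ht.ne')
  have h3 := h2.comp t h1
  rw [mul_one] at h3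
  exact h3

/-- Lipschitz bound for `t ↦ (1+t)^{-(s+1)}` on an interval to the right of `r - 1/2`. -/
lemma lip_aux {s r p q : ℝ} (hs : 0 < s) (hr : 1 ≤ r)
    (hp : p ∈ Set.Icc (r - 1/2) (r + 1/2)) (hq : q ∈ Set.Icc (r - 1/2) (r + 1/2)) :
    |(1 + p) ^ (-(s+1)) - (1 + q) ^ (-(s+1))| ≤ (s+1) * (1/2 + r) ^ (-(s+2)) * |p - q| := by
  set S : Set ℝ := Set.Icc (r - 1/2) (r + 1/2)
  have hpos : ∀ u ∈ S, 0 < 1 + u := by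
    intro u hu; have := hu.1; linarith
  have hderiv : ∀ u ∈ S, HasDerivWithinAt (fun u : ℝ => (1 + u) ^ (-(s+1)))
      (-(s+1) * (1 + u) ^ (-(s+1) - 1)) S u := fun u hu =>
    (hasDerivAt_one_add_rpow (hpos u hu)).hasDerivWithinAt
  have hbound : ∀ u ∈ S, ‖-(s+1) * (1 + u) ^ (-(s+1) - 1)‖ ≤ (s+1) * (1/2 + r) ^ (-(s+2)) := by
    intro u hu
    have h1 : (0:ℝ) < 1/2 + r := by linarith
    have h2 : 1/2 + r ≤ 1 + u := by have := hu.1; linarith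
    have h3 : (1 + u) ^ (-(s+1) - 1) ≤ (1/2 + r) ^ (-(s+1) - 1) :=
      Real.rpow_le_rpow_of_nonpos h1 h2 (by linarith)
    have h4 : (0:ℝ) ≤ (1 + u) ^ (-(s+1) - 1) := Real.rpow_nonneg (by linarith [hpos u hu]) _
    rw [norm_mul, norm_neg, Real.norm_eq_abs, Real.norm_eq_abs,
      abs_of_nonneg (by linarith : (0:ℝ) ≤ s + 1), abs_of_nonneg h4]
    have : -(s+1) - 1 = -(s+2) := by ring
    rw [this] at h3 ⊢
    exact mul_le_mul_of_nonneg_left h3 (by linarith)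
  have := Convex.norm_image_sub_le_of_norm_hasDerivWithin_le hderiv hbound
    (convex_Icc _ _) hq hp
  simpa [Real.norm_eq_abs] using this

/-- Taylor bound for `t ↦ (1+t)^{-s}` at `r`. -/
lemma taylor_aux {s r a : ℝ} (hs : 0 < s) (hr : 1 ≤ r)
    (ha : a ∈ Set.Icc (r - 1/2) (r + 1/2)) :
    |(1 + a) ^ (-s) - (1 + r) ^ (-s) + s * (1 + r) ^ (-(s+1)) * (a - r)| ≤
      s * (s+1) * (1/2 + r) ^ (-(s+2)) * (a - r)^2 := by
  set S : Set ℝ := Set.uIcc r a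
  have hrIcc : r ∈ Set.Icc (r - 1/2) (r + 1/2) := by constructor <;> linarith
  have hsub : S ⊆ Set.Icc (r - 1/2) (r + 1/2) := Set.uIcc_subset_Icc hrIcc ha
  have hpos : ∀ u ∈ S, 0 < 1 + u := by
    intro u hu; have := (hsub hu).1; linarith
  set ψ : ℝ → ℝ := fun t => (1 + t) ^ (-s) + s * (1 + r) ^ (-(s+1)) * t
  have hderiv : ∀ u ∈ S, HasDerivWithinAt ψ
      (-s * (1 + u) ^ (-s - 1) + s * (1 + r) ^ (-(s+1))) S u := by
    intro u hu
    exact (((hasDerivAt_one_add_rpow (hpos u hu)).add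
      ((hasDerivAt_id u).const_mul (s * (1 + r) ^ (-(s+1))))).hasDerivWithinAt).congr_deriv
      (by ring)
  have hbound : ∀ u ∈ S, ‖-s * (1 + u) ^ (-s - 1) + s * (1 + r) ^ (-(s+1))‖ ≤
      s * ((s+1) * (1/2 + r) ^ (-(s+2)) * |a - r|) := by
    intro u hu
    have h1 := lip_aux hs hr (hsub hu) hrIcc
    have habs : |u - r| ≤ |a - r| := by
      have := Set.abs_sub_left_of_mem_uIcc (α := ℝ) hu
      simpa using this
    have hsneg : -s - 1 = -(s+1) := by ring
    rw [hsneg]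
    have : -s * (1 + u) ^ (-(s+1)) + s * (1 + r) ^ (-(s+1)) =
        s * ((1 + r) ^ (-(s+1)) - (1 + u) ^ (-(s+1))) := by ring
    rw [this, norm_mul, Real.norm_eq_abs, Real.norm_eq_abs, abs_of_pos hs]
    refine mul_le_mul_of_nonneg_left ?_ hs.le
    calc |(1 + r) ^ (-(s+1)) - (1 + u) ^ (-(s+1))|
        = |(1 + u) ^ (-(s+1)) - (1 + r) ^ (-(s+1))| := abs_sub_comm _ _
      _ ≤ (s+1) * (1/2 + r) ^ (-(s+2)) * |u - r| := lip_aux hs hr (hsub hu) hrIcc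
      _ ≤ (s+1) * (1/2 + r) ^ (-(s+2)) * |a - r| := by
          refine mul_le_mul_of_nonneg_left habs ?_
          positivity
  have key := Convex.norm_image_sub_le_of_norm_hasDerivWithin_le hderiv hbound
    (convex_uIcc _ _) (Set.left_mem_uIcc) (Set.right_mem_uIcc)
  have : ψ a - ψ r = (1 + a) ^ (-s) - (1 + r) ^ (-s) + s * (1 + r) ^ (-(s+1)) * (a - r) := by
    simp only [ψ]; ring
  rw [this] at key
  calc |(1 + a) ^ (-s) - (1 + r) ^ (-s) + s * (1 + r) ^ (-(s+1)) * (a - r)|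
      ≤ s * ((s+1) * (1/2 + r) ^ (-(s+2)) * |a - r|) * ‖a - r‖ := key
    _ = s * (s+1) * (1/2 + r) ^ (-(s+2)) * (a - r)^2 := by
        rw [Real.norm_eq_abs]
        have h2 : |a - r| * |a - r| = (a - r)^2 := by rw [abs_mul_abs_self]; ring
        linear_combination s * ((s+1) * (1/2 + r) ^ (-(s+2))) * h2

lemma norm_add_le_aux {E : Type*} [NormedAddCommGroup E] [InnerProductSpace ℝ E]
    {x z : E} (hx : x ≠ 0) :
    ‖x + z‖ ≤ ‖x‖ + inner ℝ x z / ‖x‖ + ‖z‖^2 / (2 * ‖x‖) := by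
  have hr : (0:ℝ) < ‖x‖ := norm_pos_iff.mpr hx
  have hsq : ‖x + z‖^2 = ‖x‖^2 + 2*inner ℝ x z + ‖z‖^2 := norm_add_sq_real x z
  have h1 : 2*‖x‖*‖x+z‖ ≤ ‖x‖^2 + ‖x+z‖^2 := by nlinarith [sq_nonneg (‖x‖ - ‖x+z‖)]
  have h2 : ‖x‖^2 + ‖x+z‖^2 =
      2*‖x‖*(‖x‖ + inner ℝ x z / ‖x‖ + ‖z‖^2 / (2 * ‖x‖)) := by
    field_simp
    nlinarith [hsq]
  have h3 : 2*‖x‖*‖x+z‖ ≤ 2*‖x‖*(‖x‖ + inner ℝ x z / ‖x‖ + ‖z‖^2 / (2 * ‖x‖)) := by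
    rw [← h2]; exact h1
  exact le_of_mul_le_mul_left h3 (by linarith)

lemma sum_norm_le_aux {E : Type*} [NormedAddCommGroup E] [InnerProductSpace ℝ E]
    {x z : E} (hx : x ≠ 0) :
    ‖x + z‖ + ‖x - z‖ ≤ 2*‖x‖ + ‖z‖^2 / ‖x‖ := by
  have hr : (0:ℝ) < ‖x‖ := norm_pos_iff.mpr hx
  have h1 := norm_add_le_aux (z := z) hx
  have h2 := norm_add_le_aux (z := -z) hx
  rw [← sub_eq_add_neg] at h2
  have hi : inner ℝ x (-z) = -(inner ℝ x z : ℝ) := inner_neg_right x z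
  rw [hi, norm_neg] at h2
  rw [neg_div] at h2
  have h4 : ‖z‖^2/(2*‖x‖) + ‖z‖^2/(2*‖x‖) = ‖z‖^2/‖x‖ := by
    rw [← add_div, ← two_mul]
    rw [mul_comm (2:ℝ) ‖x‖, mul_comm (2:ℝ) (‖z‖^2), mul_div_mul_right _ _ (two_ne_zero)]
  linarith [h1, h2, h4]

lemma two_norm_le_aux {E : Type*} [NormedAddCommGroup E] [NormedSpace ℝ E] (x z : E) :
    2*‖x‖ ≤ ‖x + z‖ + ‖x - z‖ := by
  have : x + x = (x + z) + (x - z) := by abel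
  calc 2*‖x‖ = ‖(2:ℝ)•x‖ := by rw [norm_smul]; simp
    _ = ‖(x+z)+(x-z)‖ := by rw [two_smul, this]
    _ ≤ ‖x+z‖ + ‖x-z‖ := norm_add_le _ _

set_option maxHeartbeats 1000000 in
lemma second_diff_bound {E : Type*} [NormedAddCommGroup E] [InnerProductSpace ℝ E]
    {s : ℝ} (hs : 0 < s) {x z : E} (hx : 1 ≤ ‖x‖) (hz : ‖z‖ ≤ 1/2) :
    |2 * (1 + ‖x‖) ^ (-s) - (1 + ‖x + z‖) ^ (-s) - (1 + ‖x - z‖) ^ (-s)| ≤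
      (2*s + 2*s*(s+1) * 2 ^ (s+2)) * ((1 + ‖x‖) ^ (-s) * ‖z‖^2) := by
  have hxne : x ≠ 0 := by
    intro h
    rw [h, norm_zero] at hx; linarith
  set r := ‖x‖ with hr
  set a := ‖x + z‖ with hadef
  set b := ‖x - z‖ with hbdef
  have hrpos : (0:ℝ) < r := by linarith
  have haz : |a - r| ≤ ‖z‖ := by
    have := abs_norm_sub_norm_le (x + z) x
    simpa using this
  have hbz : |b - r| ≤ ‖z‖ := by
    have := abs_norm_sub_norm_le (x - z) x
    simpa using this
  have haIcc : a ∈ Set.Icc (r - 1/2) (r + 1/2) := by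
    have := abs_le.mp haz; constructor <;> linarith [this.1, this.2]
  have hbIcc : b ∈ Set.Icc (r - 1/2) (r + 1/2) := by
    have := abs_le.mp hbz; constructor <;> linarith [this.1, this.2]
  have Ta := taylor_aux hs hx haIcc
  have Tb := taylor_aux hs hx hbIcc
  set c1 : ℝ := (1 + r) ^ (-(s+1)) with hc1
  set Ea : ℝ := (1 + a) ^ (-s) - (1 + r) ^ (-s) + s * c1 * (a - r)
  set Eb : ℝ := (1 + b) ^ (-s) - (1 + r) ^ (-s) + s * c1 * (b - r)
  have hid : 2 * (1 + r) ^ (-s) - (1 + a) ^ (-s) - (1 + b) ^ (-s) =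
      -Ea - Eb + s * c1 * ((a - r) + (b - r)) := by simp only [Ea, Eb]; ring
  have habs : |2 * (1 + r) ^ (-s) - (1 + a) ^ (-s) - (1 + b) ^ (-s)| ≤
      |Ea| + |Eb| + s * c1 * |a + b - 2*r| := by
    rw [hid]
    have h1 : |(-Ea - Eb) + s * c1 * ((a - r) + (b - r))| ≤
        |(-Ea - Eb)| + |s * c1 * ((a - r) + (b - r))| := abs_add_le _ _
    have h2 : |(-Ea - Eb)| ≤ |Ea| + |Eb| := by
      calc |(-Ea - Eb)| ≤ |(-Ea)| + |Eb| := abs_sub _ _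
        _ = |Ea| + |Eb| := by rw [abs_neg]
    have hc1nn : (0:ℝ) ≤ c1 := Real.rpow_nonneg (by linarith) _
    have h3 : |s * c1 * ((a - r) + (b - r))| = s * c1 * |a + b - 2*r| := by
      rw [abs_mul, abs_of_nonneg (mul_nonneg hs.le hc1nn)]
      congr 1; congr 1; ring
    linarith [h1, h2, h3.le, h3.ge]
  -- bound the pieces
  have hz2 : (a - r)^2 ≤ ‖z‖^2 := by
    have := sq_abs (a - r); nlinarith [haz, abs_nonneg (a - r), norm_nonneg z]
  have hz2b : (b - r)^2 ≤ ‖z‖^2 := by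
    have := sq_abs (b - r); nlinarith [hbz, abs_nonneg (b - r), norm_nonneg z]
  have hhalf : (1/2 + r) ^ (-(s+2)) ≤ 2 ^ (s+2) * (1 + r) ^ (-s) := by
    have h1 : ((1 + r)/2 : ℝ) ≤ 1/2 + r := by linarith
    have h2 : (0:ℝ) < (1 + r)/2 := by linarith
    have h3 : (1/2 + r) ^ (-(s+2)) ≤ ((1 + r)/2) ^ (-(s+2)) :=
      Real.rpow_le_rpow_of_nonpos h2 h1 (by linarith)
    have h4 : ((1 + r)/2 : ℝ) ^ (-(s+2)) = 2 ^ (s+2) * (1 + r) ^ (-(s+2)) := by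
      rw [Real.div_rpow (by linarith) (by norm_num), Real.rpow_neg (by linarith : (0:ℝ) ≤ 1 + r),
        Real.rpow_neg (by norm_num : (0:ℝ) ≤ 2)]
      field_simp
    have h5 : (1 + r) ^ (-(s+2)) ≤ (1 + r) ^ (-s) :=
      Real.rpow_le_rpow_of_exponent_le (by linarith) (by linarith)
    calc (1/2 + r) ^ (-(s+2)) ≤ ((1 + r)/2) ^ (-(s+2)) := h3
      _ = 2 ^ (s+2) * (1 + r) ^ (-(s+2)) := h4
      _ ≤ 2 ^ (s+2) * (1 + r) ^ (-s) := by
          have : (0:ℝ) ≤ (2:ℝ) ^ (s+2) := Real.rpow_nonneg (by norm_num) _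
          exact mul_le_mul_of_nonneg_left h5 this
  have hEa : |Ea| ≤ s * (s+1) * (2 ^ (s+2) * (1 + r) ^ (-s)) * ‖z‖^2 := by
    calc |Ea| ≤ s * (s+1) * (1/2 + r) ^ (-(s+2)) * (a - r)^2 := Ta
      _ ≤ s * (s+1) * (2 ^ (s+2) * (1 + r) ^ (-s)) * ‖z‖^2 := by
          apply mul_le_mul
          · exact mul_le_mul_of_nonneg_left hhalf (by positivity)
          · exact hz2
          · positivity
          · positivity
  have hEb : |Eb| ≤ s * (s+1) * (2 ^ (s+2) * (1 + r) ^ (-s)) * ‖z‖^2 := by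
    calc |Eb| ≤ s * (s+1) * (1/2 + r) ^ (-(s+2)) * (b - r)^2 := Tb
      _ ≤ s * (s+1) * (2 ^ (s+2) * (1 + r) ^ (-s)) * ‖z‖^2 := by
          apply mul_le_mul
          · exact mul_le_mul_of_nonneg_left hhalf (by positivity)
          · exact hz2b
          · positivity
          · positivity
  have hmid : s * c1 * |a + b - 2*r| ≤ 2 * s * ((1 + r) ^ (-s)) * ‖z‖^2 := by
    have hlow := two_norm_le_aux x z
    have hup := sum_norm_le_aux (z := z) hxne
    have habs2 : |a + b - 2*r| ≤ ‖z‖^2 / r := by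
      rw [abs_of_nonneg (by linarith : (0:ℝ) ≤ a + b - 2*r)]
      linarith
    have hdivr : ‖z‖^2 / r ≤ 2 * ‖z‖^2 := by
      rw [div_le_iff₀ hrpos]
      nlinarith [sq_nonneg ‖z‖]
    have hc1le : c1 ≤ (1 + r) ^ (-s) :=
      Real.rpow_le_rpow_of_exponent_le (by linarith) (by linarith)
    have hc1nn : (0:ℝ) ≤ c1 := Real.rpow_nonneg (by linarith) _
    calc s * c1 * |a + b - 2*r| ≤ s * c1 * (2 * ‖z‖^2) := by
          refine mul_le_mul_of_nonneg_left (le_trans habs2 hdivr) (by positivity)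
      _ ≤ s * (1 + r) ^ (-s) * (2 * ‖z‖^2) := by
          refine mul_le_mul_of_nonneg_right (mul_le_mul_of_nonneg_left hc1le hs.le) (by positivity)
      _ = 2 * s * ((1 + r) ^ (-s)) * ‖z‖^2 := by ring
  calc |2 * (1 + r) ^ (-s) - (1 + a) ^ (-s) - (1 + b) ^ (-s)|
      ≤ |Ea| + |Eb| + s * c1 * |a + b - 2*r| := habs
    _ ≤ s * (s+1) * (2 ^ (s+2) * (1 + r) ^ (-s)) * ‖z‖^2
        + s * (s+1) * (2 ^ (s+2) * (1 + r) ^ (-s)) * ‖z‖^2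
        + 2 * s * ((1 + r) ^ (-s)) * ‖z‖^2 := by linarith
    _ = (2*s + 2*s*(s+1) * 2 ^ (s+2)) * ((1 + r) ^ (-s) * ‖z‖^2) := by ring

lemma integrableOn_norm_rpow_ball (N : ℕ) (hN : 1 ≤ N) {t : ℝ} (ht : -(N:ℝ) < t) :
    IntegrableOn (fun z : EuclideanSpace ℝ (Fin N) => ‖z‖ ^ t)
      (Metric.ball (0 : EuclideanSpace ℝ (Fin N)) 1) volume := by
  have hNtriv : Nontrivial (EuclideanSpace ℝ (Fin N)) := by
    have h0 : 0 < N := hN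
    refine ⟨⟨EuclideanSpace.single ⟨0, h0⟩ 1, 0, ?_⟩⟩
    intro h
    have h1 : (EuclideanSpace.single (⟨0, h0⟩ : Fin N) (1:ℝ)) ⟨0, h0⟩
        = (0 : EuclideanSpace ℝ (Fin N)) ⟨0, h0⟩ := by rw [h]
    rw [EuclideanSpace.single_apply] at h1
    simp at h1
  have hmeasG : AEStronglyMeasurable (fun z : EuclideanSpace ℝ (Fin N) => ‖z‖ ^ t)
      (volume : Measure (EuclideanSpace ℝ (Fin N))) :=
    (by fun_prop : Measurable fun z : EuclideanSpace ℝ (Fin N) => ‖z‖ ^ t).aestronglyMeasurable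
  have hmeas : AEStronglyMeasurable (fun z : EuclideanSpace ℝ (Fin N) => ‖z‖ ^ t)
      (volume.restrict (Metric.ball 0 1)) := hmeasG.restrict
  rcases le_or_gt 0 t with htn | htn
  · -- bounded case
    refine Measure.integrableOn_of_bounded (M := 1) (measure_ball_lt_top).ne hmeasG ?_
    filter_upwards [ae_restrict_mem measurableSet_ball] with z hz
    rw [Real.norm_eq_abs, abs_of_nonneg (Real.rpow_nonneg (norm_nonneg _) _)]
    calc ‖z‖ ^ t ≤ (1:ℝ) ^ t := by
          apply Real.rpow_le_rpow (norm_nonneg _) (le_of_lt (by simpa using hz)) htn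
      _ = 1 := Real.one_rpow t
  · -- singular case via annuli
    constructor
    · exact hmeas
    rw [hasFiniteIntegral_iff_norm]
    set A : ℕ → Set (EuclideanSpace ℝ (Fin N)) :=
      fun n => Metric.ball 0 ((1/2:ℝ)^n) \ Metric.ball 0 ((1/2:ℝ)^(n+1))
    have hcover : Metric.ball (0 : EuclideanSpace ℝ (Fin N)) 1 ⊆ {0} ∪ ⋃ n, A n := by
      intro z hz
      rcases eq_or_ne z 0 with rfl | hz0
      · exact Or.inl rfl
      · have hzpos : 0 < ‖z‖ := norm_pos_iff.mpr hz0
        have hzlt : ‖z‖ < 1 := by simpa using hz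
        have hex : ∃ n : ℕ, (1/2:ℝ)^(n+1) ≤ ‖z‖ := by
          obtain ⟨n, hn⟩ := exists_pow_lt_of_lt_one hzpos (by norm_num : (1/2:ℝ) < 1)
          exact ⟨n, by
            calc (1/2:ℝ)^(n+1) ≤ (1/2:ℝ)^n * (1/2) := by rw [pow_succ]
              _ ≤ ‖z‖ * 1 := by
                  refine mul_le_mul hn.le (by norm_num) (by norm_num) hzpos.le
              _ = ‖z‖ := mul_one _⟩
        refine Or.inr (Set.mem_iUnion.mpr ⟨Nat.find hex, ?_, ?_⟩)
        · simp only [Metric.mem_ball, dist_zero_right]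
          rcases Nat.eq_zero_or_pos (Nat.find hex) with h0 | hpos
          · rw [h0]; simpa using hzlt
          · have := Nat.find_min hex (Nat.sub_lt hpos one_pos)
            push_neg at this
            have heq : Nat.find hex - 1 + 1 = Nat.find hex := Nat.succ_pred_eq_of_pos hpos
            rw [heq] at this
            exact this
        · simp only [Metric.mem_ball, dist_zero_right, not_lt]
          exact Nat.find_spec hex
    calc ∫⁻ z in Metric.ball (0:EuclideanSpace ℝ (Fin N)) 1, ENNReal.ofReal ‖‖z‖ ^ t‖
        ≤ ∫⁻ z in {0} ∪ ⋃ n, A n, ENNReal.ofReal ‖‖z‖ ^ t‖ := lintegral_mono_set hcover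
      _ ≤ (∫⁻ z in ({0} : Set (EuclideanSpace ℝ (Fin N))), ENNReal.ofReal ‖‖z‖ ^ t‖)
          + ∫⁻ z in ⋃ n, A n, ENNReal.ofReal ‖‖z‖ ^ t‖ := lintegral_union_le _ _ _
      _ < ⊤ := by
          apply ENNReal.add_lt_top.mpr
          constructor
          · have : volume ({0} : Set (EuclideanSpace ℝ (Fin N))) = 0 := measure_singleton 0
            rw [Measure.restrict_eq_zero.mpr this]
            simp
          · calc ∫⁻ z in ⋃ n, A n, ENNReal.ofReal ‖‖z‖ ^ t‖
                ≤ ∑' n, ∫⁻ z in A n, ENNReal.ofReal ‖‖z‖ ^ t‖ := lintegral_iUnion_le _ _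
              _ ≤ ∑' n, (ENNReal.ofReal (((1/2:ℝ)^(n+1)) ^ t) * volume (A n)) := by
                  refine ENNReal.tsum_le_tsum fun n => ?_
                  have hb : ∀ z ∈ A n, ENNReal.ofReal ‖‖z‖ ^ t‖ ≤
                      ENNReal.ofReal (((1/2:ℝ)^(n+1)) ^ t) := by
                    intro z hz
                    have h1 : (1/2:ℝ)^(n+1) ≤ ‖z‖ := by
                      have := hz.2
                      simpa using this
                    have h2 : (0:ℝ) < (1/2:ℝ)^(n+1) := by positivity
                    apply ENNReal.ofReal_le_ofReal
                    rw [Real.norm_eq_abs, abs_of_nonneg (Real.rpow_nonneg (norm_nonneg _) _)]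
                    exact Real.rpow_le_rpow_of_nonpos h2 h1 htn.le
                  have hAmeas : MeasurableSet (A n) :=
                    measurableSet_ball.diff measurableSet_ball
                  calc ∫⁻ z in A n, ENNReal.ofReal ‖‖z‖ ^ t‖
                      ≤ ∫⁻ _ in A n, ENNReal.ofReal (((1/2:ℝ)^(n+1)) ^ t) :=
                        setLIntegral_mono' hAmeas hb
                    _ = ENNReal.ofReal (((1/2:ℝ)^(n+1)) ^ t) * volume (A n) := by
                        rw [setLIntegral_const]
              _ ≤ ∑' n, (ENNReal.ofReal (((1/2:ℝ)^(n+1)) ^ t)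
                    * (ENNReal.ofReal (((1/2:ℝ)^n) ^ N)
                       * volume (Metric.ball (0:EuclideanSpace ℝ (Fin N)) 1))) := by
                  refine ENNReal.tsum_le_tsum fun n => ?_
                  refine mul_le_mul_right ?_ _
                  calc volume (A n) ≤ volume (Metric.ball (0:EuclideanSpace ℝ (Fin N)) ((1/2:ℝ)^n)) :=
                        measure_mono Set.diff_subset
                    _ = ENNReal.ofReal (((1/2:ℝ)^n) ^ Module.finrank ℝ (EuclideanSpace ℝ (Fin N)))
                        * volume (Metric.ball (0:EuclideanSpace ℝ (Fin N)) 1) :=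
                        Measure.addHaar_ball volume 0 (by positivity)
                    _ = ENNReal.ofReal (((1/2:ℝ)^n) ^ N)
                        * volume (Metric.ball (0:EuclideanSpace ℝ (Fin N)) 1) := by
                        rw [finrank_euclideanSpace_fin]
              _ < ⊤ := by
                  have hgeom : ∀ n : ℕ,
                      ENNReal.ofReal (((1/2:ℝ)^(n+1)) ^ t) * (ENNReal.ofReal (((1/2:ℝ)^n) ^ N)
                        * volume (Metric.ball (0:EuclideanSpace ℝ (Fin N)) 1))
                      = (ENNReal.ofReal ((1/2:ℝ)^t) * volume (Metric.ball (0:EuclideanSpace ℝ (Fin N)) 1))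
                        * (ENNReal.ofReal ((1/2:ℝ) ^ (t + N)))^n := by
                    intro n
                    have e1 : ((1/2:ℝ)^(n+1) : ℝ) ^ t = ((1/2:ℝ)^t) * (((1/2:ℝ)^t)^n) := by
                      rw [← Real.rpow_natCast ((1/2):ℝ) (n+1), ← Real.rpow_mul (by norm_num),
                        ← Real.rpow_natCast ((1/2:ℝ)^t) n, ← Real.rpow_mul (by norm_num),
                        ← Real.rpow_add (by norm_num)]
                      congr 1; push_cast; ring
                    have e2 : (((1/2:ℝ)^n) : ℝ) ^ N = ((1/2:ℝ)^(N:ℝ))^n := by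
                      rw [← Real.rpow_natCast ((1/2:ℝ)^n) N, ← Real.rpow_natCast ((1/2:ℝ)) n,
                        ← Real.rpow_mul (by norm_num), ← Real.rpow_natCast ((1/2:ℝ)^(N:ℝ)) n,
                        ← Real.rpow_mul (by norm_num)]
                      congr 1
                      ring
                    have e3 : ((1/2:ℝ) ^ (t + N)) = ((1/2:ℝ)^t) * ((1/2:ℝ)^(N:ℝ)) :=
                      Real.rpow_add (by norm_num) _ _
                    rw [e1, e2, e3]
                    rw [ENNReal.ofReal_mul (by positivity), ENNReal.ofReal_mul (by positivity),
                      ENNReal.ofReal_pow (by positivity), ENNReal.ofReal_pow (by positivity),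
                      mul_pow]
                    ring
                  rw [tsum_congr hgeom, ENNReal.tsum_mul_left, ENNReal.tsum_geometric]
                  apply ENNReal.mul_lt_top
                  · exact ENNReal.mul_lt_top ENNReal.ofReal_lt_top measure_ball_lt_top
                  · rw [ENNReal.inv_lt_top]
                    apply tsub_pos_of_lt
                    rw [← ENNReal.ofReal_one]
                    apply ENNReal.ofReal_lt_ofReal_iff_of_nonneg (by positivity) |>.mpr
                    apply Real.rpow_lt_one (by norm_num) (by norm_num)
                    linarith

set_option maxHeartbeats 2000000 in
/-- Decay of the fractional Laplacian of `η(x) = (1+|x|)^{-(N+2γ)}`: for `|x| ≥ 1`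
the principal value `(−Δ)^γ η(x)` exists and is bounded by `C (1+|x|)^{-(N+2γ)}`. -/
theorem stmt_12 (N : ℕ) (hN : 1 ≤ N) (γ : ℝ) (hγ : γ ∈ Set.Ioo (0:ℝ) 1)
    (η : EuclideanSpace ℝ (Fin N) → ℝ)
    (hη : ∀ x, η x = (1 + ‖x‖) ^ (-((N:ℝ) + 2*γ))) :
    ∃ C > (0:ℝ), ∀ x : EuclideanSpace ℝ (Fin N), 1 ≤ ‖x‖ →
      ∃ I : ℝ,
        Tendsto (fun ε : ℝ =>
            ∫ y in {y : EuclideanSpace ℝ (Fin N) | ε < dist x y},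
              (η x - η y) / dist x y ^ ((N:ℝ) + 2*γ))
          (nhdsWithin 0 (Set.Ioi 0)) (nhds I) ∧
        |(Real.pi ^ (-(N:ℝ)/2) * 2 ^ (2*γ) *
            (Real.Gamma ((N:ℝ)/2 + γ) / Real.Gamma (1 - γ)) * γ) * I| ≤
          C * (1 + ‖x‖) ^ (-((N:ℝ) + 2*γ)) := by
  obtain ⟨hγ0, hγ1⟩ := hγ
  simp only [hη]
  have hNtriv : Nontrivial (EuclideanSpace ℝ (Fin N)) := by
    have h0 : 0 < N := hN
    refine ⟨⟨EuclideanSpace.single ⟨0, h0⟩ 1, 0, ?_⟩⟩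
    intro h
    have h1 : (EuclideanSpace.single (⟨0, h0⟩ : Fin N) (1:ℝ)) ⟨0, h0⟩
        = (0 : EuclideanSpace ℝ (Fin N)) ⟨0, h0⟩ := by rw [h]
    rw [EuclideanSpace.single_apply] at h1
    simp at h1
  have hN1 : (1:ℝ) ≤ (N:ℝ) := by exact_mod_cast hN
  set s : ℝ := (N:ℝ) + 2*γ with hsdef
  have hs0 : 0 < s := by simp only [hsdef]; linarith
  have hsN : (N:ℝ) < s := by simp only [hsdef]; linarith
  have hsN2 : s < (N:ℝ) + 2 := by simp only [hsdef]; linarith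
  have hfinrank : Module.finrank ℝ (EuclideanSpace ℝ (Fin N)) = N := finrank_euclideanSpace_fin
  set K : ℝ := 2*s + 2*s*(s+1) * 2 ^ (s+2) with hKdef
  have hK0 : (0:ℝ) ≤ K := by
    have : (0:ℝ) ≤ (2:ℝ) ^ (s+2) := Real.rpow_nonneg (by norm_num) _
    simp only [hKdef]; positivity
  have hJint : Integrable (fun z : EuclideanSpace ℝ (Fin N) => (1 + ‖z‖) ^ (-s)) volume :=
    integrable_one_add_norm (by rw [hfinrank]; exact hsN)
  set J : ℝ := ∫ z : EuclideanSpace ℝ (Fin N), (1 + ‖z‖) ^ (-s) with hJdef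
  have hJ0 : 0 ≤ J := integral_nonneg fun z => Real.rpow_nonneg (by positivity) _
  have hc2int : IntegrableOn (fun z : EuclideanSpace ℝ (Fin N) => ‖z‖ ^ (2 - s))
      (Metric.ball 0 1) volume :=
    integrableOn_norm_rpow_ball N hN (by linarith)
  set c₂ : ℝ := ∫ z in Metric.ball (0:EuclideanSpace ℝ (Fin N)) 1, ‖z‖ ^ (2 - s) with hc2def
  have hc20 : 0 ≤ c₂ :=
    setIntegral_nonneg measurableSet_ball fun z _ => Real.rpow_nonneg (norm_nonneg _) _
  set D : ℝ := (1+(4/3:ℝ)^s) * 3^s * J + 4^s * J + (K/2) * c₂ with hDdef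
  have hD0 : 0 ≤ D := by
    have h1 : (0:ℝ) ≤ (4/3:ℝ)^s := Real.rpow_nonneg (by norm_num) _
    have h2 : (0:ℝ) ≤ (3:ℝ)^s := Real.rpow_nonneg (by norm_num) _
    have h3 : (0:ℝ) ≤ (4:ℝ)^s := Real.rpow_nonneg (by norm_num) _
    simp only [hDdef]; positivity
  set coefa : ℝ := |Real.pi ^ (-(N:ℝ)/2) * 2 ^ (2*γ) *
      (Real.Gamma ((N:ℝ)/2 + γ) / Real.Gamma (1 - γ)) * γ| with hcoefa
  have hcoefa0 : 0 ≤ coefa := abs_nonneg _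
  refine ⟨coefa * D + 1, by positivity, ?_⟩
  intro x hx
  have h1r : (0:ℝ) < 1 + ‖x‖ := by linarith
  have hA0 : (0:ℝ) ≤ (1 + ‖x‖) ^ (-s) := Real.rpow_nonneg h1r.le _
  set f : EuclideanSpace ℝ (Fin N) → ℝ :=
    fun y => ((1 + ‖x‖) ^ (-s) - (1 + ‖y‖) ^ (-s)) / dist x y ^ s with hfdef
  set g : EuclideanSpace ℝ (Fin N) → ℝ :=
    fun y => (2 * (1 + ‖x‖) ^ (-s) - (1 + ‖y‖) ^ (-s) - (1 + ‖x + x - y‖) ^ (-s))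
      / (2 * dist x y ^ s) with hgdef
  have hfm : Measurable f := by simp only [hfdef]; fun_prop
  have hgm : Measurable g := by simp only [hgdef]; fun_prop
  have hdxy : ∀ y : EuclideanSpace ℝ (Fin N), dist x y = ‖x - y‖ := fun y => dist_eq_norm x y
  have hdR : ∀ y : EuclideanSpace ℝ (Fin N), dist x (x + x - y) = dist x y := by
    intro y
    rw [dist_eq_norm, dist_eq_norm]
    have h : x - (x + x - y) = -(x - y) := by abel
    rw [h, norm_neg]
  -- bound for g on the closed ball
  have hgbound : ∀ y : EuclideanSpace ℝ (Fin N), dist x y ≤ 1/2 →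
      |g y| ≤ (K/2) * (1 + ‖x‖) ^ (-s) * dist x y ^ (2 - s) := by
    intro y hy
    rcases eq_or_ne (dist x y) 0 with hd0 | hd0
    · have hyx : x = y := dist_eq_zero.mp hd0
      have hg0 : g y = 0 := by
        simp only [hgdef, ← hyx]
        have h : x + x - x = x := by abel
        rw [h]
        ring_nf
      rw [hg0, abs_zero]
      have : (0:ℝ) ≤ dist x y ^ (2 - s) := Real.rpow_nonneg dist_nonneg _
      positivity
    · have hdpos : 0 < dist x y := lt_of_le_of_ne dist_nonneg (Ne.symm hd0)
      have hz : ‖x - y‖ ≤ 1/2 := by rw [← hdxy]; exact hy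
      have hsd := second_diff_bound hs0 hx hz
      have e1 : x + (x - y) = x + x - y := by abel
      have e2 : x - (x - y) = y := by abel
      rw [e1, e2] at hsd
      have hsd' : |2 * (1 + ‖x‖) ^ (-s) - (1 + ‖y‖) ^ (-s) - (1 + ‖x + x - y‖) ^ (-s)| ≤
          K * ((1 + ‖x‖) ^ (-s) * ‖x - y‖^2) := by
        rw [show 2 * (1 + ‖x‖) ^ (-s) - (1 + ‖y‖) ^ (-s) - (1 + ‖x + x - y‖) ^ (-s)
            = 2 * (1 + ‖x‖) ^ (-s) - (1 + ‖x + x - y‖) ^ (-s) - (1 + ‖y‖) ^ (-s) from by ring]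
        exact hsd
      have hds : 0 < dist x y ^ s := Real.rpow_pos_of_pos hdpos s
      simp only [hgdef]
      rw [abs_div, abs_of_pos (by linarith : (0:ℝ) < 2 * dist x y ^ s),
        div_le_iff₀ (by linarith : (0:ℝ) < 2 * dist x y ^ s)]
      have e4 : dist x y ^ ((2:ℝ)-s) * dist x y ^ s = dist x y ^ (2:ℕ) := by
        rw [← Real.rpow_natCast (dist x y) 2, ← Real.rpow_add hdpos]
        norm_num
      calc |2 * (1 + ‖x‖) ^ (-s) - (1 + ‖y‖) ^ (-s) - (1 + ‖x + x - y‖) ^ (-s)|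
          ≤ K * ((1 + ‖x‖) ^ (-s) * ‖x - y‖^2) := hsd'
        _ = (K/2) * (1 + ‖x‖) ^ (-s) * dist x y ^ ((2:ℝ) - s) * (2 * dist x y ^ s) := by
            rw [← hdxy y]
            rw [show (K/2) * (1 + ‖x‖) ^ (-s) * dist x y ^ ((2:ℝ) - s) * (2 * dist x y ^ s)
              = K * (1 + ‖x‖) ^ (-s) * (dist x y ^ ((2:ℝ)-s) * dist x y ^ s) from by ring, e4]
            ring
  -- the far set
  set S : Set (EuclideanSpace ℝ (Fin N)) := {y | 1/2 < dist x y} with hSdef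
  have hdistc : Continuous fun y : EuclideanSpace ℝ (Fin N) => dist x y :=
    Continuous.dist continuous_const continuous_id
  have hSmeas : MeasurableSet S := (isOpen_lt continuous_const hdistc).measurableSet
  set B : Set (EuclideanSpace ℝ (Fin N)) := Metric.closedBall x (1/2) with hBdef
  have hBmeas : MeasurableSet B := measurableSet_closedBall
  have hyB : ∀ y, y ∈ B ↔ dist x y ≤ 1/2 := by
    intro y; rw [hBdef, Metric.mem_closedBall, dist_comm]
  -- generic |f| bound
  have hfabs : ∀ y, 0 < dist x y →
      |f y| ≤ ((1 + ‖x‖) ^ (-s) + (1 + ‖y‖) ^ (-s)) * dist x y ^ (-s) := by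
    intro y hd
    simp only [hfdef]
    rw [abs_div, abs_of_pos (Real.rpow_pos_of_pos hd s), div_eq_mul_inv,
      ← Real.rpow_neg hd.le]
    refine mul_le_mul_of_nonneg_right ?_ (Real.rpow_nonneg hd.le _)
    have hb0 : (0:ℝ) ≤ (1 + ‖y‖) ^ (-s) := Real.rpow_nonneg (by positivity) _
    calc |(1 + ‖x‖) ^ (-s) - (1 + ‖y‖) ^ (-s)|
        ≤ |(1 + ‖x‖) ^ (-s)| + |(1 + ‖y‖) ^ (-s)| := abs_sub _ _
      _ = (1 + ‖x‖) ^ (-s) + (1 + ‖y‖) ^ (-s) := by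
          rw [abs_of_nonneg hA0, abs_of_nonneg hb0]
  set bigB : EuclideanSpace ℝ (Fin N) → ℝ := fun y =>
    (1 + ‖x‖) ^ (-s) * ((1+(4/3:ℝ)^s) * 3^s * (1 + ‖x - y‖) ^ (-s)
      + 4^s * (1 + ‖y‖) ^ (-s)) with hbigBdef
  have hbigB_nonneg : ∀ y, 0 ≤ bigB y := by
    intro y
    have h1 : (0:ℝ) ≤ (4/3:ℝ)^s := Real.rpow_nonneg (by norm_num) _
    have h2 : (0:ℝ) ≤ (3:ℝ)^s := Real.rpow_nonneg (by norm_num) _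
    have h3 : (0:ℝ) ≤ (4:ℝ)^s := Real.rpow_nonneg (by norm_num) _
    have h4 : (0:ℝ) ≤ (1 + ‖x - y‖) ^ (-s) := Real.rpow_nonneg (by positivity) _
    have h5 : (0:ℝ) ≤ (1 + ‖y‖) ^ (-s) := Real.rpow_nonneg (by positivity) _
    simp only [hbigBdef]
    positivity
  have htransint : Integrable (fun y : EuclideanSpace ℝ (Fin N) => (1 + ‖x - y‖) ^ (-s))
      volume := by
    have h : (fun y : EuclideanSpace ℝ (Fin N) => (1 + ‖x - y‖) ^ (-s))
        = (fun z : EuclideanSpace ℝ (Fin N) => (1 + ‖z‖) ^ (-s)) ∘ (fun y => x - y) := rfl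
    rw [h]
    exact ((Measure.measurePreserving_sub_left volume x).integrable_comp_emb
      (Homeomorph.subLeft x).measurableEmbedding).mpr hJint
  have hbigB_int : Integrable bigB volume := by
    simp only [hbigBdef]
    apply Integrable.const_mul
    exact ((htransint.const_mul _).add (hJint.const_mul _))
  have hfS : ∀ y ∈ S, |f y| ≤ bigB y := by
    intro y hyS
    have hd : (1/2:ℝ) < dist x y := hyS
    have hdpos : (0:ℝ) < dist x y := by linarith
    have h1 := hfabs y hdpos
    have hds0 : (0:ℝ) ≤ dist x y ^ (-s) := Real.rpow_nonneg hdpos.le _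
    have hηy0 : (0:ℝ) ≤ (1 + ‖y‖) ^ (-s) := Real.rpow_nonneg (by positivity) _
    have hu0 : (0:ℝ) ≤ (1 + dist x y) ^ (-s) := Real.rpow_nonneg (by linarith) _
    have h43 : (0:ℝ) ≤ (4/3:ℝ)^s := Real.rpow_nonneg (by norm_num) _
    have h3s : (0:ℝ) ≤ (3:ℝ)^s := Real.rpow_nonneg (by norm_num) _
    have h4s : (0:ℝ) ≤ (4:ℝ)^s := Real.rpow_nonneg (by norm_num) _
    have hds3 : dist x y ^ (-s) ≤ 3^s * (1 + dist x y) ^ (-s) := by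
      have h2 : (1 + dist x y)/3 ≤ dist x y := by linarith
      have h3 : (0:ℝ) < (1 + dist x y)/3 := by linarith
      have h4 : dist x y ^ (-s) ≤ ((1 + dist x y)/3) ^ (-s) :=
        Real.rpow_le_rpow_of_nonpos h3 h2 (by linarith)
      have h5 : ((1 + dist x y)/3 : ℝ) ^ (-s) = 3^s * (1 + dist x y) ^ (-s) := by
        rw [Real.div_rpow (by linarith) (by norm_num),
          Real.rpow_neg (by linarith : (0:ℝ) ≤ 1 + dist x y),
          Real.rpow_neg (by norm_num : (0:ℝ) ≤ (3:ℝ))]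
        have h6 : (0:ℝ) < (3:ℝ)^s := Real.rpow_pos_of_pos (by norm_num) _
        field_simp
      linarith [h4, h5.le, h5.ge]
    have hexp : bigB y = (1 + ‖x‖) ^ (-s) * ((1+(4/3:ℝ)^s) * 3^s * (1 + dist x y) ^ (-s))
        + (1 + ‖x‖) ^ (-s) * (4^s * (1 + ‖y‖) ^ (-s)) := by
      simp only [hbigBdef]
      rw [← hdxy y]
      ring
    rcases le_or_gt (dist x y) ((1+‖x‖)/4) with hcase | hcase
    · have hy2 : (3/4:ℝ)*(1+‖x‖) ≤ 1 + ‖y‖ := by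
        have h6 : ‖x‖ - ‖y‖ ≤ ‖x - y‖ := norm_sub_norm_le x y
        rw [← hdxy] at h6
        linarith
      have hηy : (1 + ‖y‖) ^ (-s) ≤ (4/3:ℝ)^s * (1 + ‖x‖) ^ (-s) := by
        have h6 : (0:ℝ) < (3/4:ℝ)*(1+‖x‖) := by linarith
        have h7 : (1 + ‖y‖) ^ (-s) ≤ ((3/4:ℝ)*(1+‖x‖)) ^ (-s) :=
          Real.rpow_le_rpow_of_nonpos h6 hy2 (by linarith)
        have h8 : ((3/4:ℝ)*(1+‖x‖)) ^ (-s) = (4/3:ℝ)^s * (1 + ‖x‖) ^ (-s) := by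
          rw [Real.mul_rpow (by norm_num) (by linarith),
            Real.rpow_neg (by norm_num : (0:ℝ) ≤ (3/4:ℝ)),
            Real.rpow_neg (by linarith : (0:ℝ) ≤ 1 + ‖x‖)]
          rw [show ((4:ℝ)/3) = ((3:ℝ)/4)⁻¹ from by norm_num, Real.inv_rpow (by norm_num)]
        linarith [h7, h8.le, h8.ge]
      have p1 : (1 + ‖x‖) ^ (-s) * (dist x y ^ (-s)) ≤
          (1 + ‖x‖) ^ (-s) * (3^s * (1 + dist x y) ^ (-s)) :=
        mul_le_mul_of_nonneg_left hds3 hA0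
      have p2 : (1 + ‖y‖) ^ (-s) * (dist x y ^ (-s)) ≤
          ((4/3:ℝ)^s * (1 + ‖x‖) ^ (-s)) * (dist x y ^ (-s)) :=
        mul_le_mul_of_nonneg_right hηy hds0
      have p3 : ((4/3:ℝ)^s * (1 + ‖x‖) ^ (-s)) * (dist x y ^ (-s)) ≤
          ((4/3:ℝ)^s * (1 + ‖x‖) ^ (-s)) * (3^s * (1 + dist x y) ^ (-s)) :=
        mul_le_mul_of_nonneg_left hds3 (by positivity)
      have p4 : (0:ℝ) ≤ (1 + ‖x‖) ^ (-s) * (4^s * (1 + ‖y‖) ^ (-s)) := by positivity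
      nlinarith [h1, p1, p2, p3, p4, hexp]
    · have hd4 : dist x y ^ (-s) ≤ 4^s * (1 + ‖x‖) ^ (-s) := by
        have h6 : (0:ℝ) < (1+‖x‖)/4 := by linarith
        have h7 : dist x y ^ (-s) ≤ ((1+‖x‖)/4) ^ (-s) :=
          Real.rpow_le_rpow_of_nonpos h6 hcase.le (by linarith)
        have h8 : ((1+‖x‖)/4 : ℝ) ^ (-s) = 4^s * (1 + ‖x‖) ^ (-s) := by
          rw [Real.div_rpow (by linarith) (by norm_num),
            Real.rpow_neg (by linarith : (0:ℝ) ≤ 1 + ‖x‖),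
            Real.rpow_neg (by norm_num : (0:ℝ) ≤ (4:ℝ))]
          have h9 : (0:ℝ) < (4:ℝ)^s := Real.rpow_pos_of_pos (by norm_num) _
          field_simp
        linarith [h7, h8.le, h8.ge]
      have p1 : (1 + ‖x‖) ^ (-s) * (dist x y ^ (-s)) ≤
          (1 + ‖x‖) ^ (-s) * (3^s * (1 + dist x y) ^ (-s)) :=
        mul_le_mul_of_nonneg_left hds3 hA0
      have p2 : (1 + ‖y‖) ^ (-s) * (dist x y ^ (-s)) ≤
          (1 + ‖y‖) ^ (-s) * (4^s * (1 + ‖x‖) ^ (-s)) :=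
        mul_le_mul_of_nonneg_left hd4 hηy0
      have p3 : (0:ℝ) ≤ ((4/3:ℝ)^s * (1 + ‖x‖) ^ (-s)) * (3^s * (1 + dist x y) ^ (-s)) := by
        positivity
      nlinarith [h1, p1, p2, p3, hexp]
  have hfS_int : IntegrableOn f S volume := by
    apply (hbigB_int.restrict (s := S)).mono' (hfm.aestronglyMeasurable.restrict)
    filter_upwards [ae_restrict_mem hSmeas] with y hy
    rw [Real.norm_eq_abs]
    exact hfS y hy
  set far : ℝ := ∫ y in S, f y with hfardef
  have hfar_bound : |far| ≤ ((1+(4/3:ℝ)^s)*3^s*J + 4^s*J) * (1 + ‖x‖) ^ (-s) := by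
    have h1 : |far| ≤ ∫ y in S, |f y| := by
      simpa [Real.norm_eq_abs] using norm_integral_le_integral_norm (μ := volume.restrict S) f
    have h2 : ∫ y in S, |f y| ≤ ∫ y in S, bigB y :=
      setIntegral_mono_on hfS_int.abs (hbigB_int.integrableOn) hSmeas (fun y hy => hfS y hy)
    have h3 : ∫ y in S, bigB y ≤ ∫ y, bigB y :=
      setIntegral_le_integral hbigB_int (Eventually.of_forall hbigB_nonneg)
    have htrans : ∫ y : EuclideanSpace ℝ (Fin N), (1 + ‖x - y‖) ^ (-s) = J := by
      have hh : ∀ y : EuclideanSpace ℝ (Fin N), x - y = x + (-y) := fun y => sub_eq_add_neg x y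
      calc ∫ y : EuclideanSpace ℝ (Fin N), (1 + ‖x - y‖) ^ (-s)
          = ∫ y : EuclideanSpace ℝ (Fin N), (1 + ‖x + -y‖) ^ (-s) := by
            simp only [sub_eq_add_neg]
        _ = ∫ y : EuclideanSpace ℝ (Fin N), (1 + ‖x + y‖) ^ (-s) :=
            integral_neg_eq_self (fun y => (1 + ‖x + y‖) ^ (-s)) volume
        _ = ∫ y : EuclideanSpace ℝ (Fin N), (1 + ‖y‖) ^ (-s) :=
            integral_add_left_eq_self (fun y => (1 + ‖y‖) ^ (-s)) x
    have h4 : ∫ y, bigB y = ((1+(4/3:ℝ)^s)*3^s*J + 4^s*J) * (1 + ‖x‖) ^ (-s) := by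
      simp only [hbigBdef]
      rw [integral_const_mul, integral_add (htransint.const_mul _) (hJint.const_mul _),
        integral_const_mul, integral_const_mul, htrans, ← hJdef]
      ring
    linarith [h1, h2, h3, h4.le, h4.ge]
  -- near part
  have hball_setup : MeasurePreserving (fun z : EuclideanSpace ℝ (Fin N) => x + z)
      volume volume := measurePreserving_add_left volume x
  have hTe : MeasurableEmbedding (fun z : EuclideanSpace ℝ (Fin N) => x + z) :=
    (Homeomorph.addLeft x).measurableEmbedding
  have hpre : (fun z : EuclideanSpace ℝ (Fin N) => x + z) ⁻¹' (Metric.ball x 1)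
      = Metric.ball 0 1 := by
    ext z
    simp only [Set.mem_preimage, Metric.mem_ball, dist_eq_norm]
    rw [add_sub_cancel_left, sub_zero]
  have hdz : ∀ z : EuclideanSpace ℝ (Fin N), dist x (x + z) = ‖z‖ := by
    intro z
    rw [dist_eq_norm]
    have h : x - (x + z) = -z := by abel
    rw [h, norm_neg]
  have hball_int : IntegrableOn (fun y : EuclideanSpace ℝ (Fin N) => dist x y ^ ((2:ℝ)-s))
      (Metric.ball x 1) volume := by
    have h := (hball_setup.restrict_preimage_emb hTe (Metric.ball x 1)).integrable_comp_emb hTe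
      (g := fun y : EuclideanSpace ℝ (Fin N) => dist x y ^ ((2:ℝ)-s))
    rw [hpre] at h
    apply h.mp
    have heq : ((fun y : EuclideanSpace ℝ (Fin N) => dist x y ^ ((2:ℝ)-s))
        ∘ (fun z : EuclideanSpace ℝ (Fin N) => x + z))
        = fun z : EuclideanSpace ℝ (Fin N) => ‖z‖ ^ ((2:ℝ)-s) := by
      funext z; simp only [Function.comp_apply, hdz z]
    rw [heq]
    exact hc2int
  have hball_val : ∫ y in Metric.ball x 1, dist x y ^ ((2:ℝ)-s) = c₂ := by
    rw [← hball_setup.setIntegral_preimage_emb hTe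
      (fun y : EuclideanSpace ℝ (Fin N) => dist x y ^ ((2:ℝ)-s)) (Metric.ball x 1), hpre]
    rw [hc2def]
    apply setIntegral_congr_fun measurableSet_ball
    intro z _
    show dist x (x + z) ^ ((2:ℝ)-s) = ‖z‖ ^ ((2:ℝ)-s)
    rw [hdz z]
  have hbnd_int : IntegrableOn
      (fun y : EuclideanSpace ℝ (Fin N) => (K/2) * (1 + ‖x‖) ^ (-s) * dist x y ^ ((2:ℝ)-s))
      B volume := by
    exact (hball_int.mono_set
      (Metric.closedBall_subset_ball (by norm_num : (1/2:ℝ) < 1))).const_mul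
      ((K/2) * (1 + ‖x‖) ^ (-s))
  have hg_intB : IntegrableOn g B volume := by
    apply (hbnd_int).mono' (hgm.aestronglyMeasurable.restrict)
    filter_upwards [ae_restrict_mem hBmeas] with y hy
    rw [Real.norm_eq_abs]
    exact hgbound y ((hyB y).mp hy)
  set near : ℝ := ∫ y in B, g y with hneardef
  have hnear_bound : |near| ≤ ((K/2) * c₂) * (1 + ‖x‖) ^ (-s) := by
    have h1 : |near| ≤ ∫ y in B, |g y| := by
      simpa [Real.norm_eq_abs] using norm_integral_le_integral_norm (μ := volume.restrict B) g
    have h2 : ∫ y in B, |g y| ≤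
        ∫ y in B, (K/2) * (1 + ‖x‖) ^ (-s) * dist x y ^ ((2:ℝ)-s) :=
      setIntegral_mono_on hg_intB.abs hbnd_int hBmeas (fun y hy => hgbound y ((hyB y).mp hy))
    have h3 : ∫ y in B, (K/2) * (1 + ‖x‖) ^ (-s) * dist x y ^ ((2:ℝ)-s)
        = (K/2) * (1 + ‖x‖) ^ (-s) * ∫ y in B, dist x y ^ ((2:ℝ)-s) := by
      rw [← integral_const_mul]
    have h4 : ∫ y in B, dist x y ^ ((2:ℝ)-s) ≤ ∫ y in Metric.ball x 1, dist x y ^ ((2:ℝ)-s) := by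
      apply setIntegral_mono_set hball_int
      · filter_upwards with y
        exact Real.rpow_nonneg dist_nonneg _
      · exact HasSubset.Subset.eventuallyLE
          (Metric.closedBall_subset_ball (by norm_num : (1/2:ℝ) < 1))
    rw [hball_val] at h4
    have h5 : (K/2) * (1 + ‖x‖) ^ (-s) * ∫ y in B, dist x y ^ ((2:ℝ)-s)
        ≤ (K/2) * (1 + ‖x‖) ^ (-s) * c₂ :=
      mul_le_mul_of_nonneg_left h4 (by positivity)
    calc |near| ≤ ∫ y in B, |g y| := h1
      _ ≤ ∫ y in B, (K/2) * (1 + ‖x‖) ^ (-s) * dist x y ^ ((2:ℝ)-s) := h2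
      _ = (K/2) * (1 + ‖x‖) ^ (-s) * ∫ y in B, dist x y ^ ((2:ℝ)-s) := h3
      _ ≤ (K/2) * (1 + ‖x‖) ^ (-s) * c₂ := h5
      _ = ((K/2) * c₂) * (1 + ‖x‖) ^ (-s) := by ring
  -- PV pieces
  have hAmeas : ∀ ε : ℝ,
      MeasurableSet {y : EuclideanSpace ℝ (Fin N) | ε < dist x y ∧ dist x y ≤ 1/2} := by
    intro ε
    exact (measurableSet_lt measurable_const hdistc.measurable).inter
      (measurableSet_le hdistc.measurable measurable_const)
  have hfb2 : ∀ (ε : ℝ), 0 < ε → ∀ y : EuclideanSpace ℝ (Fin N), ε < dist x y →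
      |f y| ≤ 2 * ε^(-s) := by
    intro ε hε y hy
    have hdpos : 0 < dist x y := lt_trans hε hy
    have h1 := hfabs y hdpos
    have h2 : dist x y ^ (-s) ≤ ε ^ (-s) :=
      Real.rpow_le_rpow_of_nonpos hε hy.le (by linarith)
    have h3 : (1 + ‖x‖) ^ (-s) ≤ 1 :=
      Real.rpow_le_one_of_one_le_of_nonpos (by linarith) (by linarith)
    have h4 : (1 + ‖y‖) ^ (-s) ≤ 1 :=
      Real.rpow_le_one_of_one_le_of_nonpos (by linarith [norm_nonneg y]) (by linarith)
    have h5 : (0:ℝ) ≤ dist x y ^ (-s) := Real.rpow_nonneg dist_nonneg _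
    have hb0 : (0:ℝ) ≤ (1 + ‖y‖) ^ (-s) := Real.rpow_nonneg (by positivity) _
    have h6 : ((1 + ‖x‖) ^ (-s) + (1 + ‖y‖) ^ (-s)) * dist x y ^ (-s) ≤ 2 * ε^(-s) := by
      have := mul_le_mul (by linarith : (1 + ‖x‖) ^ (-s) + (1 + ‖y‖) ^ (-s) ≤ 2) h2 h5
        (by norm_num : (0:ℝ) ≤ 2)
      linarith
    linarith
  have hfA_int : ∀ ε : ℝ, 0 < ε →
      IntegrableOn f {y : EuclideanSpace ℝ (Fin N) | ε < dist x y ∧ dist x y ≤ 1/2} volume := by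
    intro ε hε
    refine Measure.integrableOn_of_bounded (M := 2 * ε^(-s)) ?_ hfm.aestronglyMeasurable ?_
    · exact ((measure_mono (fun y hy => (hyB y).mpr hy.2)).trans_lt
        measure_closedBall_lt_top).ne
    · filter_upwards [ae_restrict_mem (hAmeas ε)] with y hy
      rw [Real.norm_eq_abs]
      exact hfb2 ε hε y hy.1
  have hfRA_int : ∀ ε : ℝ, 0 < ε →
      IntegrableOn (fun y => f (x + x - y))
        {y : EuclideanSpace ℝ (Fin N) | ε < dist x y ∧ dist x y ≤ 1/2} volume := by
    intro ε hε
    refine Measure.integrableOn_of_bounded (M := 2 * ε^(-s)) ?_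
      ((hfm.comp (measurable_const.sub measurable_id)).aestronglyMeasurable) ?_
    · exact ((measure_mono (fun y hy => (hyB y).mpr hy.2)).trans_lt
        measure_closedBall_lt_top).ne
    · filter_upwards [ae_restrict_mem (hAmeas ε)] with y hy
      rw [Real.norm_eq_abs]
      refine hfb2 ε hε (x + x - y) ?_
      rw [hdR y]
      exact hy.1
  have hgf : ∀ y : EuclideanSpace ℝ (Fin N), g y = (f y + f (x + x - y)) / 2 := by
    intro y
    simp only [hfdef, hgdef]
    rw [hdR y, ← add_div, div_div]
    rw [show ((1 + ‖x‖) ^ (-s) - (1 + ‖y‖) ^ (-s)) + ((1 + ‖x‖) ^ (-s) - (1 + ‖x + x - y‖) ^ (-s))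
        = 2 * (1 + ‖x‖) ^ (-s) - (1 + ‖y‖) ^ (-s) - (1 + ‖x + x - y‖) ^ (-s) from by ring]
    rw [mul_comm (dist x y ^ s) 2]
  have hrefl : ∀ ε : ℝ, 0 < ε →
      (∫ y in {y : EuclideanSpace ℝ (Fin N) | ε < dist x y ∧ dist x y ≤ 1/2}, f y)
      = ∫ y in {y : EuclideanSpace ℝ (Fin N) | ε < dist x y ∧ dist x y ≤ 1/2}, g y := by
    intro ε hε
    set Aε := {y : EuclideanSpace ℝ (Fin N) | ε < dist x y ∧ dist x y ≤ 1/2} with hAe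
    have hRpre : (fun y : EuclideanSpace ℝ (Fin N) => x + x - y) ⁻¹' Aε = Aε := by
      ext y
      simp only [Set.mem_preimage, hAe, Set.mem_setOf_eq]
      rw [hdR y]
    have hstep : (∫ y in Aε, f (x + x - y)) = ∫ y in Aε, f y := by
      have h := (Measure.measurePreserving_sub_left volume (x+x)).setIntegral_preimage_emb
        (Homeomorph.subLeft (x+x)).measurableEmbedding f Aε
      rw [hRpre] at h
      exact h
    symm
    calc ∫ y in Aε, g y = ∫ y in Aε, (f y + f (x + x - y))/2 := by
          apply integral_congr_ae
          filter_upwards with y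
          exact hgf y
      _ = ((∫ y in Aε, f y) + ∫ y in Aε, f (x + x - y))/2 := by
          rw [integral_div, integral_add (hfA_int ε hε) (hfRA_int ε hε)]
      _ = ∫ y in Aε, f y := by rw [hstep]; ring
  have hU : ∀ ε : ℝ, 0 < ε → ε < 1/2 →
      {y : EuclideanSpace ℝ (Fin N) | ε < dist x y}
      = S ∪ {y : EuclideanSpace ℝ (Fin N) | ε < dist x y ∧ dist x y ≤ 1/2} := by
    intro ε h0 h2
    ext y
    simp only [Set.mem_setOf_eq, Set.mem_union, hSdef]
    constructor
    · intro h
      rcases le_or_gt (dist x y) (1/2) with hle | hlt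
      · exact Or.inr ⟨h, hle⟩
      · exact Or.inl hlt
    · rintro (h | ⟨h, _⟩)
      · linarith
      · exact h
  have hsplit : ∀ ε : ℝ, 0 < ε → ε < 1/2 →
      (∫ y in {y : EuclideanSpace ℝ (Fin N) | ε < dist x y}, f y)
      = far + ∫ y in {y : EuclideanSpace ℝ (Fin N) | ε < dist x y ∧ dist x y ≤ 1/2}, g y := by
    intro ε h0 h2
    rw [hU ε h0 h2, setIntegral_union ?_ (hAmeas ε) hfS_int (hfA_int ε h0), hrefl ε h0,
      ← hfardef]
    rw [Set.disjoint_left]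
    intro y hyS hyA
    have h3 : (1/2:ℝ) < dist x y := hyS
    have h4 := hyA.2
    linarith
  -- the limit
  refine ⟨far + near, ?_, ?_⟩
  · have ht1 : Tendsto
        (fun ε : ℝ => ∫ y in {y : EuclideanSpace ℝ (Fin N) | ε < dist x y ∧ dist x y ≤ 1/2}, g y)
        (𝓝[>] 0) (𝓝 near) := by
      have hrw : ∀ ε : ℝ,
          (∫ y in {y : EuclideanSpace ℝ (Fin N) | ε < dist x y ∧ dist x y ≤ 1/2}, g y)
          = ∫ y, ({y : EuclideanSpace ℝ (Fin N) | ε < dist x y ∧ dist x y ≤ 1/2}).indicator g y :=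
        fun ε => (integral_indicator (hAmeas ε)).symm
      have hrw2 : near = ∫ y, B.indicator g y := (integral_indicator hBmeas).symm
      rw [hrw2]
      simp_rw [hrw]
      have hbnd_nonneg : ∀ y, 0 ≤ (K/2) * (1 + ‖x‖) ^ (-s) * dist x y ^ ((2:ℝ)-s) := by
        intro y
        have := Real.rpow_nonneg (dist_nonneg (x := x) (y := y)) ((2:ℝ)-s)
        positivity
      apply tendsto_integral_filter_of_dominated_convergence
        (bound := B.indicator (fun y => (K/2) * (1 + ‖x‖) ^ (-s) * dist x y ^ ((2:ℝ)-s)))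
      · exact Eventually.of_forall fun ε =>
          ((hgm.indicator (hAmeas ε)).aestronglyMeasurable)
      · apply Eventually.of_forall
        intro ε
        apply Eventually.of_forall
        intro y
        rw [Real.norm_eq_abs]
        by_cases hyA : y ∈ {y : EuclideanSpace ℝ (Fin N) | ε < dist x y ∧ dist x y ≤ 1/2}
        · rw [Set.indicator_of_mem hyA, Set.indicator_of_mem ((hyB y).mpr hyA.2)]
          exact hgbound y hyA.2
        · rw [Set.indicator_of_notMem hyA, abs_zero]
          exact Set.indicator_nonneg (fun y' _ => hbnd_nonneg y') y
      · rw [integrable_indicator_iff hBmeas]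
        exact hbnd_int
      · haveI := hNtriv
        have hx0 : volume ({x} : Set (EuclideanSpace ℝ (Fin N))) = 0 := measure_singleton x
        filter_upwards [compl_mem_ae_iff.mpr hx0] with y hy
        have hyx : y ≠ x := hy
        have hdy : 0 < dist x y := dist_pos.mpr (Ne.symm hyx)
        have hev : ∀ᶠ ε in 𝓝[>] (0:ℝ),
            ({y' : EuclideanSpace ℝ (Fin N) | ε < dist x y' ∧ dist x y' ≤ 1/2}).indicator g y
            = B.indicator g y := by
          filter_upwards [Ioo_mem_nhdsGT_of_mem
            (⟨le_refl (0:ℝ), hdy⟩ : (0:ℝ) ∈ Set.Ico (0:ℝ) (dist x y))] with ε hε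
          by_cases hyb : dist x y ≤ 1/2
          · have hm1 : y ∈ {y' : EuclideanSpace ℝ (Fin N) | ε < dist x y' ∧ dist x y' ≤ 1/2} :=
              ⟨hε.2, hyb⟩
            rw [Set.indicator_of_mem hm1, Set.indicator_of_mem ((hyB y).mpr hyb)]
          · rw [Set.indicator_of_notMem (fun hc => hyb hc.2),
              Set.indicator_of_notMem (fun hc => hyb ((hyB y).mp hc))]
        exact Tendsto.congr' (hev.mono fun ε h => h.symm) tendsto_const_nhds
    have ht2 := ht1.const_add far
    apply Tendsto.congr' ?_ ht2
    filter_upwards [Ioo_mem_nhdsGT_of_mem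
      (⟨le_refl (0:ℝ), by norm_num⟩ : (0:ℝ) ∈ Set.Ico (0:ℝ) (1/2:ℝ))] with ε hε
    exact (hsplit ε hε.1 hε.2).symm
  · -- the bound
    have hI : |far + near| ≤ D * (1 + ‖x‖) ^ (-s) := by
      have h1 := abs_add_le far near
      have h2 : ((1+(4/3:ℝ)^s)*3^s*J + 4^s*J) * (1 + ‖x‖) ^ (-s)
          + ((K/2) * c₂) * (1 + ‖x‖) ^ (-s) = D * (1 + ‖x‖) ^ (-s) := by
        rw [hDdef]; ring
      calc |far + near| ≤ |far| + |near| := abs_add_le far near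
        _ ≤ ((1+(4/3:ℝ)^s)*3^s*J + 4^s*J) * (1 + ‖x‖) ^ (-s)
            + ((K/2) * c₂) * (1 + ‖x‖) ^ (-s) := add_le_add hfar_bound hnear_bound
        _ = D * (1 + ‖x‖) ^ (-s) := h2
    calc |Real.pi ^ (-(N:ℝ)/2) * 2 ^ (2*γ) *
            (Real.Gamma ((N:ℝ)/2 + γ) / Real.Gamma (1 - γ)) * γ * (far + near)|
        = coefa * |far + near| := by rw [abs_mul, hcoefa]
      _ ≤ coefa * (D * (1 + ‖x‖) ^ (-s)) := mul_le_mul_of_nonneg_left hI hcoefa0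
      _ = (coefa * D) * (1 + ‖x‖) ^ (-s) := by ring
      _ ≤ (coefa * D + 1) * (1 + ‖x‖) ^ (-s) := by
          apply mul_le_mul_of_nonneg_right (by linarith) hA0
end

section
/- Instability transfer under kernel rescaling: let 0 < L₀ < L, let K : ℝ\{0} → (0,∞) be even with ξK(ξ) strictly decreasing on (0,∞), and K_M the M-periodization of K for M > 0. Suppose φ is a nonzero L₀-periodic function with κ ∫_0^{L₀}∫_0^{L₀} (φ(t)−φ(τ))² K_{L₀}(t−τ) dt dτ = c(β−1) ∫_0^{L₀} φ² for some κ, c > 0, β > 1. Then the rescaled L-periodic function ψ(t) = φ(L₀ t / L) satisfies κ ∫_0^L∫_0^L (ψ(t)−ψ(τ))² K_L(t−τ) dt dτ < c(β−1) ∫_0^L ψ². -/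
open MeasureTheory Set

private lemma nullLine (a : ℝ) :
    (volume : Measure (ℝ × ℝ)) {p : ℝ × ℝ | p.1 - p.2 = a} = 0 := by
  have hs : MeasurableSet {p : ℝ × ℝ | p.1 - p.2 = a} :=
    (measurable_fst.sub measurable_snd) (measurableSet_singleton a)
  rw [Measure.volume_eq_prod, Measure.prod_apply hs]
  have h : ∀ x : ℝ, (volume : Measure ℝ) {y : ℝ | x - y = a} = 0 := by
    intro x
    have he : {y : ℝ | x - y = a} = {x - a} := by
      ext y
      simp only [mem_setOf_eq, mem_singleton_iff]
      constructor <;> intro h <;> linarith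
    rw [he]
    exact measure_singleton _
  simp only [show ∀ x : ℝ, (Prod.mk x ⁻¹' {p : ℝ × ℝ | p.1 - p.2 = a}) = {y : ℝ | x - y = a}
    from fun _ => rfl, h]
  simp

private lemma iterProd {a : ℝ} (ha : 0 ≤ a) (h : ℝ → ℝ → ℝ)
    (hI : IntegrableOn (fun p : ℝ × ℝ => h p.1 p.2) (Ioo 0 a ×ˢ Ioo 0 a)) :
    (∫ t in (0:ℝ)..a, ∫ τ in (0:ℝ)..a, h t τ)
      = ∫ p in (Ioo 0 a ×ˢ Ioo 0 a), h p.1 p.2 := by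
  simp only [intervalIntegral.integral_of_le ha, integral_Ioc_eq_integral_Ioo]
  rw [show (volume : Measure (ℝ × ℝ)) = volume.prod volume from Measure.volume_eq_prod ℝ ℝ,
    ← Measure.prod_restrict]
  refine integral_integral ?_
  rw [Measure.prod_restrict, ← Measure.volume_eq_prod]
  exact hI

set_option maxHeartbeats 1000000 in
/-- Instability transfer under kernel rescaling: if the nonzero `L₀`-periodic
function `φ` saturates the linearized quadratic form for the `L₀`-periodized
kernel, then its rescaling `ψ(t) = φ(L₀ t/L)` makes the corresponding quadratic
form for the `L`-periodized kernel strictly negative, for any `L > L₀`. -/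
theorem stmt_19 (K : ℝ → ℝ) (hKpos : ∀ x : ℝ, x ≠ 0 → 0 < K x)
    (hKeven : ∀ x : ℝ, K (-x) = K x)
    (hmono : ∀ x y : ℝ, 0 < x → x < y → y * K y < x * K x)
    (L₀ L κ c β : ℝ) (hL₀ : 0 < L₀) (hL : L₀ < L)
    (hκ : 0 < κ) (hc : 0 < c) (hβ : 1 < β)
    (hsum : ∀ M : ℝ, 0 < M → ∀ ξ : ℝ, (∀ j : ℤ, ξ - j * M ≠ 0) →
      Summable (fun j : ℤ => K (ξ - j * M)))
    (φ : ℝ → ℝ) (hmeas : Measurable φ) (hper : Function.Periodic φ L₀)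
    (hφsq : 0 < ∫ t in (0:ℝ)..L₀, φ t ^ 2)
    (hint₀ : IntegrableOn
      (fun p : ℝ × ℝ => (φ p.1 - φ p.2) ^ 2 * ∑' j : ℤ, K (p.1 - p.2 - j * L₀))
      (Set.Ioo 0 L₀ ×ˢ Set.Ioo 0 L₀))
    (hint : IntegrableOn
      (fun p : ℝ × ℝ =>
        (φ (L₀ * p.1 / L) - φ (L₀ * p.2 / L)) ^ 2 * ∑' j : ℤ, K (p.1 - p.2 - j * L))
      (Set.Ioo 0 L ×ˢ Set.Ioo 0 L))
    (heq : κ * ∫ t in (0:ℝ)..L₀, ∫ τ in (0:ℝ)..L₀,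
        (φ t - φ τ) ^ 2 * ∑' j : ℤ, K (t - τ - j * L₀) =
      c * (β - 1) * ∫ t in (0:ℝ)..L₀, φ t ^ 2) :
    κ * ∫ t in (0:ℝ)..L, ∫ τ in (0:ℝ)..L,
        (φ (L₀ * t / L) - φ (L₀ * τ / L)) ^ 2 * ∑' j : ℤ, K (t - τ - j * L) <
      c * (β - 1) * ∫ t in (0:ℝ)..L, (φ (L₀ * t / L)) ^ 2 := by
  have hLpos : (0:ℝ) < L := hL₀.trans hL
  set r : ℝ := L / L₀ with hrdef
  have hr0 : (0:ℝ) < r := div_pos hLpos hL₀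
  have hr1 : (1:ℝ) < r := (one_lt_div hL₀).2 hL
  have hLr : L = r * L₀ := by
    rw [hrdef, div_mul_cancel₀ L hL₀.ne']
  clear_value r
  have hrne : r ≠ 0 := hr0.ne'
  -- pointwise kernel inequality
  have key : ∀ x : ℝ, x ≠ 0 → r * K (r * x) < K x := by
    have pos : ∀ x : ℝ, 0 < x → r * K (r * x) < K x := by
      intro x hx
      have hrx : x < r * x := by nlinarith
      have h2 := hmono x (r * x) hx hrx
      have hK := hKpos (r * x) (by positivity)
      nlinarith
    intro x hx
    rcases hx.lt_or_gt with h | h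
    · have hthis := pos (-x) (by linarith)
      rw [show r * -x = -(r * x) by ring, hKeven, hKeven] at hthis
      exact hthis
    · exact pos x h
  -- periodized kernel inequality
  have klem : ∀ ξ : ℝ, (∀ j : ℤ, ξ - j * L₀ ≠ 0) →
      r * ∑' j : ℤ, K (r * ξ - j * L) < ∑' j : ℤ, K (ξ - j * L₀) := by
    intro ξ hξ
    have harg : ∀ j : ℤ, r * ξ - j * L = r * (ξ - j * L₀) := by
      intro j; rw [hLr]; ring
    have hne : ∀ j : ℤ, r * ξ - j * L ≠ 0 := fun j => by
      rw [harg j]; exact mul_ne_zero hr0.ne' (hξ j)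
    have hs1 : Summable fun j : ℤ => K (r * ξ - j * L) := hsum L hLpos (r * ξ) hne
    have hs2 : Summable fun j : ℤ => K (ξ - j * L₀) := hsum L₀ hL₀ ξ hξ
    rw [← tsum_mul_left]
    refine Summable.tsum_lt_tsum (f := fun j : ℤ => r * K (r * ξ - j * L)) (i := 0)
      (fun j => ?_) ?_ (hs1.mul_left r) hs2
    · show r * K (r * ξ - j * L) ≤ K (ξ - j * L₀)
      rw [harg j]
      exact (key _ (hξ j)).le
    · show r * K (r * ξ - (0:ℤ) * L) < K (ξ - (0:ℤ) * L₀)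
      rw [harg 0]
      exact key _ (hξ 0)
  -- notation
  set Ω₀ : Set (ℝ × ℝ) := Ioo 0 L₀ ×ˢ Ioo 0 L₀ with hΩ₀def
  set Ω : Set (ℝ × ℝ) := Ioo 0 L ×ˢ Ioo 0 L with hΩdef
  have hΩm : MeasurableSet Ω := (measurableSet_Ioo.prod measurableSet_Ioo)
  set f : ℝ × ℝ → ℝ :=
    fun p => (φ p.1 - φ p.2) ^ 2 * ∑' j : ℤ, K (p.1 - p.2 - j * L₀) with hfdef
  set bigI : ℝ × ℝ → ℝ :=
    fun p => (φ (L₀ * p.1 / L) - φ (L₀ * p.2 / L)) ^ 2 * ∑' j : ℤ, K (p.1 - p.2 - j * L)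
    with hbigIdef
  set A : ℝ := ∫ p in Ω₀, f p with hAdef
  set B : ℝ := ∫ p in Ω, bigI p with hBdef
  -- convert iterated integrals to product integrals
  have hA : (∫ t in (0:ℝ)..L₀, ∫ τ in (0:ℝ)..L₀,
      (φ t - φ τ) ^ 2 * ∑' j : ℤ, K (t - τ - j * L₀)) = A :=
    iterProd hL₀.le (fun t τ => (φ t - φ τ) ^ 2 * ∑' j : ℤ, K (t - τ - j * L₀)) hint₀
  have hB : (∫ t in (0:ℝ)..L, ∫ τ in (0:ℝ)..L,
      (φ (L₀ * t / L) - φ (L₀ * τ / L)) ^ 2 * ∑' j : ℤ, K (t - τ - j * L)) = B :=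
    iterProd hLpos.le
      (fun t τ => (φ (L₀ * t / L) - φ (L₀ * τ / L)) ^ 2 * ∑' j : ℤ, K (t - τ - j * L)) hint
  rw [hA] at heq
  rw [hB]
  clear_value A B
  -- positivity of A
  have hApos : 0 < A := by
    have h1 : 0 < c * (β - 1) * ∫ t in (0:ℝ)..L₀, φ t ^ 2 :=
      mul_pos (mul_pos hc (by linarith)) hφsq
    nlinarith [heq]
  -- the scaling map
  set T : ℝ × ℝ → ℝ × ℝ := fun p => r • p with hTdef
  have hTemb : MeasurableEmbedding T :=
    (Homeomorph.smulOfNeZero r hr0.ne').toMeasurableEquiv.measurableEmbedding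
  have hmapT : Measure.map T (volume : Measure (ℝ × ℝ))
      = ENNReal.ofReal ((r ^ 2)⁻¹) • volume := by
    have h := Measure.map_addHaar_smul (volume : Measure (ℝ × ℝ)) hr0.ne'
    simp only [Module.finrank_prod, Module.finrank_self] at h
    rw [show T = (r • ·) from rfl, h]
    norm_num [abs_of_pos (by positivity : (0:ℝ) < (r ^ 2)⁻¹)]
  have hpre : T ⁻¹' Ω = Ω₀ := by
    ext p
    simp only [hTdef, hΩdef, hΩ₀def, mem_preimage, mem_prod, mem_Ioo, Prod.smul_fst,
      Prod.smul_snd, smul_eq_mul]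
    rw [hLr]
    constructor
    · rintro ⟨⟨h1, h2⟩, h3, h4⟩
      refine ⟨⟨?_, ?_⟩, ?_, ?_⟩ <;> nlinarith
    · rintro ⟨⟨h1, h2⟩, h3, h4⟩
      refine ⟨⟨?_, ?_⟩, ?_, ?_⟩ <;> nlinarith
  have hmapRes : Measure.map T (volume.restrict Ω₀)
      = ENNReal.ofReal ((r ^ 2)⁻¹) • volume.restrict Ω := by
    rw [← hpre, ← Measure.restrict_map hTemb.measurable hΩm, hmapT, Measure.restrict_smul]
  -- integrability of the rescaled integrand
  have hbigTint : Integrable (bigI ∘ T) (volume.restrict Ω₀) := by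
    rw [← hTemb.integrable_map_iff, hmapRes]
    exact hint.smul_measure ENNReal.ofReal_ne_top
  -- value of the rescaled integral
  have hval : (∫ p in Ω₀, bigI (T p)) = (r ^ 2)⁻¹ * B := by
    calc (∫ p in Ω₀, bigI (T p))
        = ∫ q, bigI q ∂(Measure.map T (volume.restrict Ω₀)) :=
          (hTemb.integral_map bigI).symm
      _ = (ENNReal.ofReal ((r ^ 2)⁻¹)).toReal • ∫ q in Ω, bigI q := by
          rw [hmapRes, integral_smul_measure]
      _ = (r ^ 2)⁻¹ * B := by
          rw [ENNReal.toReal_ofReal (by positivity), hBdef, smul_eq_mul]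
  set g : ℝ × ℝ → ℝ := fun p => r * bigI (T p) with hgdef
  have hgI : Integrable g (volume.restrict Ω₀) := by
    have := hbigTint.const_mul r
    exact this
  have hgval : (∫ p in Ω₀, g p) = r * ((r ^ 2)⁻¹ * B) := by
    simp only [hgdef]
    rw [MeasureTheory.integral_const_mul, hval]
  -- explicit form of g
  have hTco : ∀ p : ℝ × ℝ, (T p).1 = r * p.1 ∧ (T p).2 = r * p.2 := by
    intro p; constructor <;> simp [hTdef]
  have hgform : ∀ p : ℝ × ℝ,
      g p = (φ p.1 - φ p.2) ^ 2 * (r * ∑' j : ℤ, K (r * (p.1 - p.2) - j * L)) := by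
    intro p
    have e0 : ∀ x : ℝ, L₀ * (r * x) / L = x := by
      intro x; rw [hLr]; field_simp
    have e3 : ∀ j : ℤ, r * p.1 - r * p.2 - j * L = r * (p.1 - p.2) - j * L := by
      intro j; ring
    simp only [hgdef, hbigIdef, (hTco p).1, (hTco p).2, e0]
    simp_rw [e3]
    ring
  -- exceptional null set
  set N : Set (ℝ × ℝ) := ⋃ j : ℤ, {p : ℝ × ℝ | p.1 - p.2 = j * L₀} with hNdef
  have hN : (volume : Measure (ℝ × ℝ)) N = 0 :=
    measure_iUnion_null fun j => nullLine _
  have hNr : (volume.restrict Ω₀) N = 0 := by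
    have hle : (volume.restrict Ω₀) N ≤ (volume : Measure (ℝ × ℝ)) N :=
      Measure.restrict_apply_le _ _
    exact le_antisymm (hle.trans hN.le) zero_le
  have hoff : ∀ p : ℝ × ℝ, p ∉ N → ∀ j : ℤ, p.1 - p.2 - j * L₀ ≠ 0 := by
    intro p hp j
    have : ¬ (p.1 - p.2 = j * L₀) := by
      intro hcon
      exact hp (mem_iUnion.2 ⟨j, hcon⟩)
    intro hcon
    exact this (by linarith [sub_eq_zero.mp hcon])
  -- comparison off the null set
  have hfg : ∀ p : ℝ × ℝ, p ∉ N → g p ≤ f p := by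
    intro p hp
    rw [hgform p, hfdef]
    exact mul_le_mul_of_nonneg_left (klem (p.1 - p.2) (hoff p hp)).le (sq_nonneg _)
  have hfglt : ∀ p : ℝ × ℝ, p ∉ N → (φ p.1 - φ p.2) ^ 2 ≠ 0 → g p < f p := by
    intro p hp hF
    rw [hgform p, hfdef]
    exact mul_lt_mul_of_pos_left (klem (p.1 - p.2) (hoff p hp))
      (lt_of_le_of_ne (sq_nonneg _) (Ne.symm hF))
  have hNae : ∀ᵐ p ∂(volume.restrict Ω₀), p ∉ N := by
    rw [ae_iff]
    simpa only [not_not, Set.setOf_mem_eq] using hNr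
  have hle_ae : g ≤ᵐ[volume.restrict Ω₀] f := hNae.mono fun p hp => hfg p hp
  have hf_nonneg : 0 ≤ᵐ[volume.restrict Ω₀] f := by
    refine hNae.mono fun p hp => ?_
    rw [hfdef]
    exact mul_nonneg (sq_nonneg _) (tsum_nonneg fun j => (hKpos _ (hoff p hp j)).le)
  have hfi : Integrable f (volume.restrict Ω₀) := hint₀
  -- strict inequality of the product integrals
  have hsupp : 0 < (volume.restrict Ω₀) (Function.support fun p => f p - g p) := by
    have h1 : 0 < (volume.restrict Ω₀) (Function.support f) :=
      (integral_pos_iff_support_of_nonneg_ae hf_nonneg hfi).mp (hAdef ▸ hApos)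
    have h2 : (volume.restrict Ω₀) (Function.support f \ N)
        = (volume.restrict Ω₀) (Function.support f) := measure_diff_null hNr
    have hsub : Function.support f \ N ⊆ Function.support fun p => f p - g p := by
      rintro p ⟨hpf, hpN⟩
      have hF : (φ p.1 - φ p.2) ^ 2 ≠ 0 := by
        intro h0
        apply hpf
        show f p = 0
        rw [hfdef]
        simp [h0]
      have hlt := hfglt p hpN hF
      simp only [Function.mem_support]
      intro hcon
      linarith
    calc (0:ENNReal) < (volume.restrict Ω₀) (Function.support f) := h1
      _ = (volume.restrict Ω₀) (Function.support f \ N) := h2.symm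
      _ ≤ (volume.restrict Ω₀) (Function.support fun p => f p - g p) := measure_mono hsub
  have hdiff_nonneg : 0 ≤ᵐ[volume.restrict Ω₀] fun p => f p - g p :=
    hle_ae.mono fun p hp => sub_nonneg.2 hp
  have hdiff_int : Integrable (fun p => f p - g p) (volume.restrict Ω₀) := hfi.sub hgI
  have hpos : 0 < ∫ p in Ω₀, (f p - g p) :=
    (integral_pos_iff_support_of_nonneg_ae hdiff_nonneg hdiff_int).mpr hsupp
  have hglt : (∫ p in Ω₀, g p) < A := by
    have h := hpos
    rw [integral_sub hfi hgI] at h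
    have hAeq : A = ∫ p in Ω₀, f p := hAdef
    linarith [h, hAeq]
  rw [hgval] at hglt
  have hBlt : B < r * A := by
    have hrr : r * ((r ^ 2)⁻¹ * B) = B / r := by
      field_simp
    rw [hrr] at hglt
    have h2 := (div_lt_iff₀ hr0).mp hglt
    linarith [mul_comm A r, h2]
  -- rescale the single integral
  have hSL : (∫ t in (0:ℝ)..L, (φ (L₀ * t / L)) ^ 2) = r * ∫ t in (0:ℝ)..L₀, φ t ^ 2 := by
    have harg : ∀ t : ℝ, L₀ * t / L = t / r := by
      intro t; rw [hrdef, div_div_eq_mul_div]; ring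
    simp_rw [harg]
    rw [intervalIntegral.integral_comp_div (fun u => φ u ^ 2) hr0.ne']
    rw [zero_div, show L / r = L₀ from by rw [hrdef]; field_simp]
    rfl
  rw [hSL]
  -- final arithmetic
  have hfinal : c * (β - 1) * (r * ∫ t in (0:ℝ)..L₀, φ t ^ 2) = κ * (r * A) := by
    linear_combination r * heq.symm
  rw [hfinal]
  exact mul_lt_mul_of_pos_left hBlt hκ
end
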